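/- arXiv:1107.1290 — 8 statements merged into one kernel-verified Lean document; each statement's English description precedes it below -/
import Mathlib

section
/- Let W ∈ ℂ[z₁,…,z_N] be a nondegenerate quasi-homogeneous polynomial of type (q₁,…,q_N) with all weights qᵢ ≤ 1/2. Then for every constant C > 0 one has |∇W(z)|² − C·|∇²W(z)| → ∞ as ‖z‖ → ∞ in ℂ^N; that is, for every C > 0 and every K ∈ ℝ there is R > 0 such that ‖z‖ ≥ R implies Σᵢ|∂W/∂zᵢ(z)|² − C·Σ_{i,j}|∂²W/∂zᵢ∂z_j(z)| ≥ K. (Strong tameness of the hypersurface section-bundle system (ℂ^N, W) with the standard flat metric.) -/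
/-!
Write `t ^ k • u` for the point `(t ^ kᵢ uᵢ)ᵢ`. Quasi-homogeneity means every monomial of `W` has
weight `d`, so `∂ᵢW (t ^ k • u) = t ^ (d - kᵢ) ∂ᵢW u` and
`∂ᵢ∂ⱼW (t ^ k • u) = t ^ (d - kᵢ - kⱼ) ∂ᵢ∂ⱼW u`. Every `z ≠ 0` is `t ^ k • u` with `u` on the unit
sphere of the sup norm, and `t → ∞` as `‖z‖ → ∞`. As `2 kᵢ ≤ d`, for `t ≥ 1`
`|∇W z|² ≥ t ^ d |∇W u|²` and `|∇²W z| ≤ t ^ (d - 2) |∇²W u|`. On the compact sphere,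
nondegeneracy gives `|∇W|² ≥ m > 0` and continuity `|∇²W| ≤ M`, so
`|∇W z|² - C |∇²W z| ≥ t ^ (d - 2) (t² m - |C| M) → ∞`.
-/

open MvPolynomial

namespace MvPolynomial

variable {σ R : Type*}

theorem IsWeightedHomogeneous.eval_pow_mul [CommSemiring R] {w : σ → ℕ} {p : MvPolynomial σ R}
    {e : ℕ} (hp : p.IsWeightedHomogeneous w e) (t : R) (v : σ → R) :
    eval (fun i => t ^ w i * v i) p = t ^ e * eval v p := by
  induction hp using IsWeightedHomogeneous.induction_on with
  | zero => simp
  | add p q _ _ hp hq => simp only [eval_add, hp, hq, mul_add]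
  | monomial m r hm =>
    simp only [eval_monomial, Finsupp.prod, mul_pow, Finset.prod_mul_distrib, ← pow_mul,
      Finset.prod_pow_eq_pow_sum, ← hm, Finsupp.weight_apply, Finsupp.sum, smul_eq_mul,
      mul_comm (w _)]
    ring

theorem isWeightedHomogeneous_of_eval_pow_mul [CommRing R] [IsDomain R] [CharZero R]
    {w : σ → ℕ} {p : MvPolynomial σ R} {e : ℕ}
    (h : ∀ (t : R) (v : σ → R), eval (fun i => t ^ w i * v i) p = t ^ e * eval v p) :
    p.IsWeightedHomogeneous w e := by
  classical
  intro m hm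
  -- Scaling by `2` alone separates the weights, since `n ↦ 2 ^ n` is injective in characteristic 0.
  have hscaled : ∑ n ∈ p.support, monomial n ((2 : R) ^ Finsupp.weight w n * coeff n p)
      = C ((2 : R) ^ e) * p := by
    refine MvPolynomial.funext fun v => ?_
    conv_rhs => rw [eval_mul, eval_C, ← h, ← support_sum_monomial_coeff p]
    rw [map_sum, map_sum]
    refine Finset.sum_congr rfl fun n _ => ?_
    rw [(isWeightedHomogeneous_monomial w n _ rfl).eval_pow_mul, eval_monomial, eval_monomial,
      mul_assoc]
  have hcoeff := congrArg (coeff m) hscaled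
  rw [coeff_sum, Finset.sum_eq_single m (fun n _ hn => by rw [coeff_monomial, if_neg hn])
    (fun h' => absurd (mem_support_iff.mpr hm) h'), coeff_monomial, if_pos rfl,
    coeff_C_mul] at hcoeff
  have h2 : ((2 ^ Finsupp.weight w m : ℕ) : R) = ((2 ^ e : ℕ) : R) := by
    exact_mod_cast mul_right_cancel₀ hm hcoeff
  exact Nat.pow_right_injective le_rfl (Nat.cast_injective h2)

end MvPolynomial

open Filter Metric

section Tameness

variable {ι : Type*} {k : ι → ℕ}

theorem norm_eval_pow_mul {p : MvPolynomial ι ℂ} {e : ℕ} (hp : p.IsWeightedHomogeneous k e)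
    {t : ℝ} (ht : 0 ≤ t) (u : ι → ℂ) :
    ‖eval (fun i => (t : ℂ) ^ k i * u i) p‖ = t ^ e * ‖eval u p‖ := by
  rw [hp.eval_pow_mul, norm_mul, norm_pow, Complex.norm_real, Real.norm_of_nonneg ht]

variable [Fintype ι]

noncomputable def gradNormSq (W : MvPolynomial ι ℂ) (z : ι → ℂ) : ℝ :=
  ∑ i, ‖eval z (pderiv i W)‖ ^ 2

noncomputable def hessNorm (W : MvPolynomial ι ℂ) (z : ι → ℂ) : ℝ :=
  ∑ i, ∑ j, ‖eval z (pderiv i (pderiv j W))‖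

theorem continuous_gradNormSq (W : MvPolynomial ι ℂ) : Continuous (gradNormSq W) :=
  continuous_finsetSum _ fun _ _ => (continuous_eval _).norm.pow 2

theorem continuous_hessNorm (W : MvPolynomial ι ℂ) : Continuous (hessNorm W) :=
  continuous_finsetSum _ fun _ _ => continuous_finsetSum _ fun _ _ =>
    (continuous_eval _).norm

variable {W : MvPolynomial ι ℂ} {d : ℕ}

theorem pow_mul_gradNormSq_le (hW : W.IsWeightedHomogeneous k d) (hkd : ∀ i, 2 * k i ≤ d)
    {t : ℝ} (ht : 1 ≤ t) (u : ι → ℂ) :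
    t ^ d * gradNormSq W u ≤ gradNormSq W (fun i => (t : ℂ) ^ k i * u i) := by
  rw [gradNormSq, gradNormSq, Finset.mul_sum]
  refine Finset.sum_le_sum fun i _ => ?_
  have hi := hkd i
  rw [norm_eval_pow_mul (hW.pderiv (Nat.sub_add_cancel (by omega))) (by positivity), mul_pow,
    ← pow_mul]
  exact mul_le_mul_of_nonneg_right (pow_le_pow_right₀ ht (by omega)) (by positivity)

theorem hessNorm_le_pow_mul (hk : ∀ i, 0 < k i) (hW : W.IsWeightedHomogeneous k d)
    (hkd : ∀ i, 2 * k i ≤ d) {t : ℝ} (ht : 1 ≤ t) (u : ι → ℂ) :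
    hessNorm W (fun i => (t : ℂ) ^ k i * u i) ≤ t ^ (d - 2) * hessNorm W u := by
  rw [hessNorm, hessNorm, Finset.mul_sum]
  refine Finset.sum_le_sum fun i _ => ?_
  rw [Finset.mul_sum]
  refine Finset.sum_le_sum fun j _ => ?_
  have := hkd i; have := hkd j; have := hk i; have := hk j
  have hWij : (pderiv i (pderiv j W)).IsWeightedHomogeneous k (d - k j - k i) :=
    (hW.pderiv (Nat.sub_add_cancel (by omega))).pderiv (Nat.sub_add_cancel (by omega))
  rw [norm_eval_pow_mul hWij (by positivity)]
  exact mul_le_mul_of_nonneg_right (pow_le_pow_right₀ ht (by omega)) (norm_nonneg _)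

theorem exists_pos_forall_le_gradNormSq
    (hnd : ∀ z : ι → ℂ, (∀ i, eval z (pderiv i W) = 0) → z = 0) :
    ∃ m > 0, ∀ u ∈ sphere (0 : ι → ℂ) 1, m ≤ gradNormSq W u := by
  refine (isCompact_sphere 0 1).exists_forall_le' (continuous_gradNormSq W).continuousOn
    fun u hu => ?_
  have hu0 : u ≠ 0 := ne_zero_of_mem_unit_sphere ⟨u, hu⟩
  by_contra! hle
  refine hu0 (hnd u fun i => norm_eq_zero.mp (pow_eq_zero_iff two_ne_zero |>.mp ?_))
  exact (Finset.sum_eq_zero_iff_of_nonneg fun i _ => by positivity).mp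
    (le_antisymm hle (Finset.sum_nonneg fun i _ => by positivity)) i (Finset.mem_univ i)

theorem exists_eq_pow_mul_of_ne_zero (hk : ∀ i, 0 < k i) {z : ι → ℂ} (hz : z ≠ 0) :
    ∃ t : ℝ, 0 < t ∧ ∃ u ∈ sphere (0 : ι → ℂ) 1, z = fun i => (t : ℂ) ^ k i * u i := by
  obtain ⟨j, hj⟩ := Function.ne_iff.mp hz
  obtain ⟨i₀, -, hi₀⟩ := Finset.exists_max_image Finset.univ
    (fun i => ‖z i‖ ^ ((k i : ℝ)⁻¹)) ⟨j, Finset.mem_univ j⟩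
  set t := ‖z i₀‖ ^ ((k i₀ : ℝ)⁻¹)
  have ht : 0 < t := (Real.rpow_pos_of_pos (norm_pos_iff.mpr hj) _).trans_le
    (hi₀ j (Finset.mem_univ j))
  have hle : ∀ i, ‖z i‖ ≤ t ^ k i := fun i => by
    rw [← Real.rpow_inv_natCast_pow (norm_nonneg (z i)) (hk i).ne']
    exact pow_le_pow_left₀ (by positivity) (hi₀ i (Finset.mem_univ i)) _
  have htC : ∀ i, (t : ℂ) ^ k i ≠ 0 := fun i => pow_ne_zero _ (by exact_mod_cast ht.ne')
  have hnorm : ∀ i, ‖z i / (t : ℂ) ^ k i‖ = ‖z i‖ / t ^ k i := fun i => by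
    rw [norm_div, norm_pow, Complex.norm_real, Real.norm_of_nonneg ht.le]
  refine ⟨t, ht, fun i => z i / (t : ℂ) ^ k i, ?_, funext fun i => (mul_div_cancel₀ _ (htC i)).symm⟩
  rw [mem_sphere_zero_iff_norm]
  refine le_antisymm ((pi_norm_le_iff_of_nonneg zero_le_one).mpr fun i => ?_) ?_
  · rw [hnorm, div_le_one (by positivity)]
    exact hle i
  · have heq : t ^ k i₀ = ‖z i₀‖ := Real.rpow_inv_natCast_pow (norm_nonneg _) (hk i₀).ne'
    calc (1 : ℝ) = ‖z i₀ / (t : ℂ) ^ k i₀‖ := by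
          rw [hnorm, heq, div_self (heq ▸ pow_pos ht _).ne']
      _ ≤ _ := norm_le_pi_norm (fun i => z i / (t : ℂ) ^ k i) i₀

theorem hessNorm_nonneg (W : MvPolynomial ι ℂ) (z : ι → ℂ) : 0 ≤ hessNorm W z :=
  Finset.sum_nonneg fun _ _ => Finset.sum_nonneg fun _ _ => norm_nonneg _

theorem norm_pow_mul_le_pow_sum {u : ι → ℂ} (hu : ‖u‖ ≤ 1) {t T : ℝ} (ht : 0 ≤ t) (hT : 1 ≤ T)
    (htT : t ≤ T) : ‖fun i => (t : ℂ) ^ k i * u i‖ ≤ T ^ ∑ i, k i := by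
  refine (pi_norm_le_iff_of_nonneg (by positivity)).mpr fun i => ?_
  calc ‖(t : ℂ) ^ k i * u i‖ = t ^ k i * ‖u i‖ := by
        rw [norm_mul, norm_pow, Complex.norm_real, Real.norm_of_nonneg ht]
    _ ≤ T ^ k i * 1 :=
        mul_le_mul (pow_le_pow_left₀ ht htT _) ((norm_le_pi_norm u i).trans hu) (norm_nonneg _)
          (by positivity)
    _ ≤ T ^ ∑ i, k i := by
        rw [mul_one]
        exact pow_le_pow_right₀ hT (Finset.single_le_sum (fun _ _ => Nat.zero_le _)
          (Finset.mem_univ i))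

theorem sq_mul_sub_le_gradNormSq_sub_mul_hessNorm (hk : ∀ i, 0 < k i)
    (hW : W.IsWeightedHomogeneous k d) (hkd : ∀ i, 2 * k i ≤ d) (hd : 2 ≤ d) {C m M t : ℝ}
    (ht : 1 ≤ t) {u : ι → ℂ} (hmu : m ≤ gradNormSq W u) (hgu : hessNorm W u ≤ M)
    (hCM : |C| * M ≤ t ^ 2 * m) :
    t ^ 2 * m - |C| * M ≤ gradNormSq W (fun i => (t : ℂ) ^ k i * u i)
      - C * hessNorm W (fun i => (t : ℂ) ^ k i * u i) := by
  have hf := pow_mul_gradNormSq_le hW hkd ht u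
  have hg := hessNorm_le_pow_mul hk hW hkd ht u
  calc t ^ 2 * m - |C| * M ≤ t ^ (d - 2) * (t ^ 2 * m - |C| * M) :=
        le_mul_of_one_le_left (by linarith) (one_le_pow₀ ht)
    _ = t ^ d * m - |C| * (t ^ (d - 2) * M) := by
        rw [← Nat.sub_add_cancel hd, pow_add, Nat.add_sub_cancel]; ring
    _ ≤ t ^ d * gradNormSq W u - |C| * (t ^ (d - 2) * hessNorm W u) := by gcongr
    _ ≤ gradNormSq W (fun i => (t : ℂ) ^ k i * u i)
          - |C| * hessNorm W (fun i => (t : ℂ) ^ k i * u i) := by gcongr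
    _ ≤ _ := by gcongr; exacts [hessNorm_nonneg W _, le_abs_self C]

theorem tendsto_gradNormSq_sub_mul_hessNorm (hk : ∀ i, 0 < k i)
    (hW : W.IsWeightedHomogeneous k d) (hkd : ∀ i, 2 * k i ≤ d) (hd : 2 ≤ d)
    (hnd : ∀ z : ι → ℂ, (∀ i, eval z (pderiv i W) = 0) → z = 0) (C : ℝ) :
    Tendsto (fun z => gradNormSq W z - C * hessNorm W z) (Bornology.cobounded (ι → ℂ)) atTop := by
  obtain ⟨m, hm, hmf⟩ := exists_pos_forall_le_gradNormSq hnd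
  obtain ⟨M, hM⟩ :=
    (isCompact_sphere (0 : ι → ℂ) 1).bddAbove_image (continuous_hessNorm W).continuousOn
  rw [Filter.tendsto_atTop]
  intro B
  obtain ⟨T, hT⟩ := eventually_atTop.mp <| (eventually_ge_atTop 1).and <|
    ((tendsto_pow_atTop (α := ℝ) two_ne_zero).atTop_mul_const hm).eventually_ge_atTop
      (max (|C| * M) (B + |C| * M))
  have hT1 : 1 ≤ T := (hT T le_rfl).1
  filter_upwards [tendsto_norm_cobounded_atTop.eventually_gt_atTop (T ^ ∑ i, k i)] with z hz
  have hz0 : z ≠ 0 := by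
    rintro rfl
    rw [norm_zero] at hz
    exact hz.not_ge (by positivity)
  obtain ⟨t, ht, u, hu, rfl⟩ := exists_eq_pow_mul_of_ne_zero hk hz0
  have htT : T ≤ t := by
    by_contra! h
    exact hz.not_ge (norm_pow_mul_le_pow_sum (mem_sphere_zero_iff_norm.mp hu).le ht.le hT1 h.le)
  obtain ⟨h1t, hmt⟩ := hT t htT
  have := sq_mul_sub_le_gradNormSq_sub_mul_hessNorm hk hW hkd hd h1t (hmf u hu)
    (hM (Set.mem_image_of_mem _ hu)) ((le_max_left _ _).trans hmt)
  linarith [(le_max_right _ _).trans hmt]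

end Tameness

theorem exists_pos_forall_le_of_tendsto_cobounded {E : Type*} [SeminormedAddCommGroup E]
    {f : E → ℝ} (hf : Tendsto f (Bornology.cobounded E) atTop) (K : ℝ) :
    ∃ R, 0 < R ∧ ∀ z, R ≤ ‖z‖ → K ≤ f z := by
  obtain ⟨r, -, hr⟩ := hasBasis_cobounded_norm.eventually_iff.mp (hf.eventually_ge_atTop K)
  exact ⟨max r 1, by positivity, fun z hz => hr (le_of_max_le_left hz)⟩

theorem strong_tameness_quasihomogeneous_general
    (N : ℕ) (hN : 1 ≤ N) (W : MvPolynomial (Fin N) ℂ)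
    (q : Fin N → ℚ) (k : Fin N → ℕ) (d : ℕ)
    (hk : ∀ i, 0 < k i) (hd : 0 < d)
    (hq : ∀ i, q i = (k i : ℚ) / (d : ℚ))
    (hhom : ∀ (lam : ℂ) (z : Fin N → ℂ),
      eval (fun i => lam ^ (k i) * z i) W = lam ^ d * eval z W)
    (hnd : ∀ z : Fin N → ℂ, (∀ i, eval z (pderiv i W) = 0) → z = 0)
    (hhalf : ∀ i, q i ≤ 1 / 2) :
    ∀ C : ℝ, 0 < C → ∀ K : ℝ, ∃ R : ℝ, 0 < R ∧
      ∀ z : EuclideanSpace ℂ (Fin N), R ≤ ‖z‖ →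
        K ≤ (∑ i, ‖eval (z : Fin N → ℂ) (pderiv i W)‖ ^ 2)
            - C * ∑ i, ∑ j, ‖eval (z : Fin N → ℂ) (pderiv i (pderiv j W))‖ := by
  intro C _ K
  have hkd : ∀ i, 2 * k i ≤ d := fun i => by
    have h := hhalf i
    rw [hq i, div_le_iff₀ (by exact_mod_cast hd)] at h
    exact_mod_cast (by push_cast; linarith : ((2 * k i : ℕ) : ℚ) ≤ d)
  have hd2 : 2 ≤ d := le_trans (by have := hk ⟨0, hN⟩; omega) (hkd ⟨0, hN⟩)
  have hF := (tendsto_gradNormSq_sub_mul_hessNorm hk (isWeightedHomogeneous_of_eval_pow_mul hhom)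
    hkd hd2 hnd C).comp (PiLp.antilipschitzWith_ofLp 2 fun _ : Fin N => ℂ).tendsto_cobounded
  exact exists_pos_forall_le_of_tendsto_cobounded hF K

/-- **Strong tameness of the hypersurface section-bundle system `(ℂ^N, W)`.**
If `W` is a nondegenerate quasi-homogeneous polynomial of type `(q₁,…,q_N)` with all
weights `qᵢ ≤ 1/2`, then for every `C > 0` one has
`|∇W(z)|² − C·|∇²W(z)| → ∞` as `‖z‖ → ∞` in `ℂ^N`. -/
theorem strong_tameness_quasihomogeneous
    (N : ℕ) (hN : 1 ≤ N) (W : MvPolynomial (Fin N) ℂ)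
    (q : Fin N → ℚ) (k : Fin N → ℕ) (d : ℕ)
    (hk : ∀ i, 0 < k i) (hd : 0 < d)
    (hq : ∀ i, q i = (k i : ℚ) / (d : ℚ))
    (hq0 : ∀ i, 0 < q i) (hq1 : ∀ i, q i < 1)
    (hhom : ∀ (lam : ℂ) (z : Fin N → ℂ),
      eval (fun i => lam ^ (k i) * z i) W = lam ^ d * eval z W)
    (hnd : ∀ z : Fin N → ℂ, (∀ i, eval z (pderiv i W) = 0) → z = 0)
    (hhalf : ∀ i, q i ≤ 1 / 2) :
    ∀ C : ℝ, 0 < C → ∀ K : ℝ, ∃ R : ℝ, 0 < R ∧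
      ∀ z : EuclideanSpace ℂ (Fin N), R ≤ ‖z‖ →
        K ≤ (∑ i, ‖eval (z : Fin N → ℂ) (pderiv i W)‖ ^ 2)
            - C * ∑ i, ∑ j, ‖eval (z : Fin N → ℂ) (pderiv i (pderiv j W))‖ :=
  strong_tameness_quasihomogeneous_general N hN W q k d hk hd hq hhom hnd hhalf
end

section
/- Let W ∈ ℂ[z₁,…,z_N] be a nondegenerate quasi-homogeneous polynomial of type (q₁,…,q_N) with all weights qᵢ ≤ 1/2. Let G₁,…,G_m be monomials in z₁,…,z_N, each of quasi-homogeneous weight strictly less than 1, and for t = (t₁,…,t_m) ∈ ℂ^m set F(z,t) = W(z) + Σ_{j=1}^m t_j G_j(z) (the lower deformation of W). Then for every fixed t ∈ ℂ^m and every constant C > 0, Σᵢ|∂F/∂zᵢ(z,t)|² − C·Σ_{i,j}|∂²F/∂zᵢ∂z_j(z,t)| → ∞ as ‖z‖ → ∞ in ℂ^N. (Strong tameness of the section-bundle system (ℂ^N, F(·,t)).) -/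
/-!
Write `z = μ ^ k • u` with `‖u‖ = 1` and `μ ≥ 1` (weighted polar coordinates; `μ → ∞` as
`‖z‖ → ∞`). Each `∂ᵢW` is weighted homogeneous of degree `d - kᵢ`, and by nondegeneracy and
compactness of the sphere some `|∂ᵢW(u)|` is bounded below uniformly in `u`. The deformation
term `∂ᵢ(Σ tⱼGⱼ)` has weighted degree `< d - kᵢ`, so it cannot cancel this, and
`|∇F(z)|² ≳ μ ^ (2(d - kᵢ)) ≥ μ ^ d` because `kᵢ ≤ d/2`. Every second derivative of `F` has
weighted degree `≤ d - 2`, so `|∇²F(z)| ≲ μ ^ (d - 2)`, which loses against `μ ^ d`.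
-/

open MvPolynomial Finset

namespace MvPolynomial

variable {σ R : Type*}

def weightedDilation [Monoid R] (k : σ → ℕ) (μ : R) (z : σ → R) : σ → R :=
  fun i => μ ^ k i * z i

theorem weightedTotalDegree_pderiv_le [CommSemiring R] (k : σ → ℕ) (P : MvPolynomial σ R)
    (i : σ) : weightedTotalDegree k (pderiv i P) ≤ weightedTotalDegree k P - k i := by
  classical
  refine Finset.sup_le fun m hm => ?_
  rw [mem_support_iff, coeff_pderiv] at hm
  have := le_weightedTotalDegree k (mem_support_iff.mpr (left_ne_zero_of_mul hm))
  rw [map_add, Finsupp.weight_single, one_smul] at this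
  omega

theorem weightedTotalDegree_sum_C_mul_monomial_lt {ι : Type*} [CommSemiring R] [Fintype ι]
    {k : σ → ℕ} {d : ℕ} {a : ι → σ →₀ ℕ} (t : ι → R) (hd : 0 < d)
    (ha : ∀ j, Finsupp.weight k (a j) < d) :
    weightedTotalDegree k (∑ j, C (t j) * monomial (a j) 1) < d := by
  classical
  refine (Finset.sup_lt_iff (by simpa using hd)).mpr fun m hm => ?_
  obtain ⟨j, -, hj⟩ := Finset.mem_biUnion.mp (support_sum hm)
  rw [C_mul_monomial] at hj
  rw [Finset.mem_singleton.mp (support_monomial_subset hj)]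
  exact ha j

section Fintype

variable [Fintype σ]

theorem prod_weightedDilation_pow [CommMonoid R] (k : σ → ℕ) (μ : R) (z : σ → R)
    (m : σ →₀ ℕ) :
    ∏ i, weightedDilation k μ z i ^ m i = μ ^ Finsupp.weight k m * ∏ i, z i ^ m i := by
  rw [Finsupp.weight_eq_sum, ← prod_pow_eq_pow_sum, ← prod_mul_distrib]
  refine prod_congr rfl fun i _ => ?_
  rw [weightedDilation, mul_pow, ← pow_mul, smul_eq_mul, mul_comm (m i)]

theorem eval_weightedDilation [CommSemiring R] (k : σ → ℕ) (μ : R) (z : σ → R)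
    (P : MvPolynomial σ R) :
    eval (weightedDilation k μ z) P =
      ∑ m ∈ P.support, coeff m P * (μ ^ Finsupp.weight k m * ∏ i, z i ^ m i) := by
  simp_rw [eval_eq', prod_weightedDilation_pow]

theorem IsWeightedHomogeneous.eval_weightedDilation [CommSemiring R] {k : σ → ℕ}
    {P : MvPolynomial σ R} {n : ℕ} (hP : IsWeightedHomogeneous k P n) (μ : R) (z : σ → R) :
    eval (weightedDilation k μ z) P = μ ^ n * eval z P := by
  rw [MvPolynomial.eval_weightedDilation, eval_eq', mul_sum]
  refine sum_congr rfl fun m hm => ?_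
  rw [hP (mem_support_iff.mp hm)]
  ring

theorem isWeightedHomogeneous_of_eval_weightedDilation_two [CommRing R] [IsDomain R]
    [CharZero R] {k : σ → ℕ} {P : MvPolynomial σ R} {n : ℕ}
    (h : ∀ z, eval (weightedDilation k 2 z) P = 2 ^ n * eval z P) :
    IsWeightedHomogeneous k P n := by
  classical
  have : Infinite R := Infinite.of_injective _ Nat.cast_injective
  have hpoly : ∑ m ∈ P.support, monomial m (coeff m P * 2 ^ Finsupp.weight k m) = C (2 ^ n) * P :=
    MvPolynomial.funext fun z => by
      simp only [map_sum, eval_monomial, Finsupp.prod_pow, map_mul, eval_C, ← h,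
        MvPolynomial.eval_weightedDilation]
      exact sum_congr rfl fun m _ => by ring
  intro m hm
  have hcoeff := congrArg (coeff m) hpoly
  rw [coeff_sum, sum_eq_single m (fun b _ hb => by rw [coeff_monomial, if_neg hb])
    (fun h => absurd (mem_support_iff.mpr hm) h), coeff_monomial, if_pos rfl, coeff_C_mul,
    mul_comm] at hcoeff
  have hpow : ((2 ^ Finsupp.weight k m : ℕ) : R) = ((2 ^ n : ℕ) : R) := by
    push_cast; exact mul_right_cancel₀ hm hcoeff
  exact Nat.pow_right_injective le_rfl (Nat.cast_injective hpow)

section Norm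

variable {𝕜 : Type*} [NormedField 𝕜]

def coeffNormSum (P : MvPolynomial σ 𝕜) : ℝ := ∑ m ∈ P.support, ‖coeff m P‖

theorem norm_eval_weightedDilation_le {k : σ → ℕ} {P : MvPolynomial σ 𝕜} {n : ℕ}
    (hP : weightedTotalDegree k P ≤ n) {μ : 𝕜} (hμ : 1 ≤ ‖μ‖) {u : σ → 𝕜}
    (hu : ∀ i, ‖u i‖ ≤ 1) :
    ‖eval (weightedDilation k μ u) P‖ ≤ coeffNormSum P * ‖μ‖ ^ n := by
  rw [eval_weightedDilation, coeffNormSum, sum_mul]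
  refine (norm_sum_le _ _).trans (sum_le_sum fun m hm => ?_)
  have hprod : ‖∏ i, u i ^ m i‖ ≤ 1 := by
    rw [norm_prod]
    exact prod_le_one (fun i _ => norm_nonneg _)
      fun i _ => by rw [norm_pow]; exact pow_le_one₀ (norm_nonneg _) (hu i)
  have hpow : ‖μ‖ ^ Finsupp.weight k m ≤ ‖μ‖ ^ n :=
    pow_le_pow_right₀ hμ ((le_weightedTotalDegree k hm).trans hP)
  rw [norm_mul, norm_mul, norm_pow]
  gcongr
  calc ‖μ‖ ^ Finsupp.weight k m * ‖∏ i, u i ^ m i‖ ≤ ‖μ‖ ^ n * 1 := by gcongr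
    _ = ‖μ‖ ^ n := mul_one _

theorem norm_eval_weightedDilation_add_ge {k : σ → ℕ} {P Q : MvPolynomial σ 𝕜} {n : ℕ}
    (hP : IsWeightedHomogeneous k P (n + 1)) (hQ : weightedTotalDegree k Q ≤ n) {μ : 𝕜}
    (hμ : 1 ≤ ‖μ‖) {u : σ → 𝕜} (hu : ∀ i, ‖u i‖ ≤ 1)
    (hdom : 2 * coeffNormSum Q ≤ ‖μ‖ * ‖eval u P‖) :
    ‖μ‖ ^ (n + 1) * ‖eval u P‖ / 2 ≤ ‖eval (weightedDilation k μ u) (P + Q)‖ := by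
  have hPμ : ‖eval (weightedDilation k μ u) P‖ = ‖μ‖ ^ (n + 1) * ‖eval u P‖ := by
    rw [hP.eval_weightedDilation, norm_mul, norm_pow]
  have hQμ := norm_eval_weightedDilation_le hQ hμ hu
  have hsub := norm_sub_norm_le (eval (weightedDilation k μ u) P)
    (-eval (weightedDilation k μ u) Q)
  rw [norm_neg, sub_neg_eq_add, ← map_add, hPμ] at hsub
  have : 0 ≤ ‖μ‖ ^ n := by positivity
  rw [pow_succ] at hsub ⊢
  nlinarith

end Norm

end Fintype

end MvPolynomial

section EuclideanSpace

variable {σ 𝕜 : Type*} [Fintype σ] [RCLike 𝕜]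

theorem exists_pos_le_norm_eval_pderiv_of_norm_eq_one [Nonempty σ] {P : MvPolynomial σ 𝕜}
    (hP : ∀ z : σ → 𝕜, (∀ i, eval z (pderiv i P) = 0) → z = 0) :
    ∃ c > 0, ∀ u : EuclideanSpace 𝕜 σ, ‖u‖ = 1 → ∃ i, c ≤ ‖eval (u : σ → 𝕜) (pderiv i P)‖ := by
  set f : EuclideanSpace 𝕜 σ → ℝ := fun u => ∑ i, ‖eval (u : σ → 𝕜) (pderiv i P)‖
  have hf : Continuous f := continuous_finsetSum _ fun i _ =>
    ((continuous_eval _).comp (PiLp.continuous_ofLp 2 _)).norm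
  have hpos : ∀ u ∈ Metric.sphere (0 : EuclideanSpace 𝕜 σ) 1, 0 < f u := by
    intro u hu
    refine lt_of_le_of_ne (sum_nonneg fun _ _ => norm_nonneg _) fun h0 => ?_
    have hcrit : ∀ i, eval (u : σ → 𝕜) (pderiv i P) = 0 := fun i => norm_eq_zero.mp
      ((sum_eq_zero_iff_of_nonneg fun _ _ => norm_nonneg _).mp h0.symm i (mem_univ i))
    have : u = 0 := WithLp.ofLp_injective 2 (hP _ hcrit)
    simp [this] at hu
  obtain ⟨c, hc, hcf⟩ := (isCompact_sphere _ _).exists_forall_le' hf.continuousOn hpos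
  refine ⟨c / Fintype.card σ, by positivity, fun u hu => ?_⟩
  have hsum : ∑ _i : σ, c / Fintype.card σ ≤ f u := by
    rw [sum_const, card_univ, nsmul_eq_mul, mul_div_cancel₀ _ (by positivity)]
    exact hcf u (mem_sphere_zero_iff_norm.mpr hu)
  obtain ⟨i, -, hi⟩ := exists_le_of_sum_le univ_nonempty hsum
  exact ⟨i, hi⟩

theorem exists_eq_weightedDilation {k : σ → ℕ} {n : ℕ} (hk : ∀ i, 0 < k i)
    (hkn : ∀ i, k i ≤ n) (z : EuclideanSpace 𝕜 σ) (hz : 1 ≤ ‖z‖) :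
    ∃ (μ : ℝ) (u : EuclideanSpace 𝕜 σ), 1 ≤ μ ∧ ‖u‖ = 1 ∧
      (z : σ → 𝕜) = weightedDilation k (μ : 𝕜) u ∧ ‖z‖ ≤ μ ^ n := by
  set g : ℝ → ℝ := fun ρ => ∑ i, ‖z i‖ ^ 2 / ρ ^ (2 * k i)
  have hg : ContinuousOn g (Set.Icc 1 ‖z‖) :=
    continuousOn_finsetSum _ fun i _ => continuousOn_const.div (continuousOn_pow _)
      fun ρ hρ => pow_ne_zero _ (by linarith [hρ.1])
  have hg1 : 1 ≤ g 1 := by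
    simpa [g, ← EuclideanSpace.norm_sq_eq] using one_le_pow₀ (n := 2) hz
  have hgz : g ‖z‖ ≤ 1 := calc
    g ‖z‖ ≤ ∑ i, ‖z i‖ ^ 2 / ‖z‖ ^ 2 := sum_le_sum fun i _ =>
        div_le_div_of_nonneg_left (by positivity) (by positivity)
          (pow_le_pow_right₀ hz (by linarith [hk i]))
    _ = 1 := by rw [← sum_div, ← EuclideanSpace.norm_sq_eq, div_self (by positivity)]
  obtain ⟨μ, hμ, hgμ⟩ := intermediate_value_Icc' hz hg ⟨hgz, hg1⟩
  have hμ0 : 0 < μ := by linarith [hμ.1]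
  set u : EuclideanSpace 𝕜 σ := WithLp.toLp 2 fun i => z i / (μ : 𝕜) ^ k i
  have hzu : ∀ i, ‖z i‖ = μ ^ k i * ‖u i‖ := fun i => by
    simp [u, norm_div, abs_of_pos hμ0, mul_div_cancel₀ _ (pow_pos hμ0 _).ne']
  have hu : ‖u‖ = 1 := by
    refine (pow_eq_one_iff_of_nonneg (norm_nonneg _) two_ne_zero).mp ?_
    rw [EuclideanSpace.norm_sq_eq, ← hgμ]
    refine sum_congr rfl fun i _ => ?_
    rw [hzu, mul_pow, ← pow_mul, mul_comm (k i), mul_div_cancel_left₀ _ (by positivity)]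
  refine ⟨μ, u, hμ.1, hu, funext fun i => ?_, ?_⟩
  · have hμ𝕜 : (μ : 𝕜) ^ k i ≠ 0 := pow_ne_zero _ (RCLike.ofReal_ne_zero.mpr hμ0.ne')
    simp [weightedDilation, u, mul_div_cancel₀ _ hμ𝕜]
  · refine (pow_le_pow_iff_left₀ (norm_nonneg _) (by positivity) two_ne_zero).mp ?_
    calc ‖z‖ ^ 2 = ∑ i, (μ ^ k i) ^ 2 * ‖u i‖ ^ 2 := by
          rw [EuclideanSpace.norm_sq_eq]; simp_rw [hzu, mul_pow]
      _ ≤ ∑ i, (μ ^ n) ^ 2 * ‖u i‖ ^ 2 := sum_le_sum fun i _ => by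
          gcongr
          exacts [hμ.1, hkn i]
      _ = (μ ^ n) ^ 2 := by rw [← mul_sum, ← EuclideanSpace.norm_sq_eq, hu, one_pow, mul_one]

end EuclideanSpace

section StrongTameness

variable {σ 𝕜 : Type*} [Fintype σ] [RCLike 𝕜] {k : σ → ℕ} {d : ℕ}

theorem exists_pos_mul_pow_le_sum_norm_sq_eval_pderiv [Nonempty σ] {W V : MvPolynomial σ 𝕜}
    (hk : ∀ i, 0 < k i) (h2k : ∀ i, 2 * k i ≤ d) (hW : IsWeightedHomogeneous k W d)
    (hnd : ∀ z : σ → 𝕜, (∀ i, eval z (pderiv i W) = 0) → z = 0)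
    (hV : weightedTotalDegree k V < d) :
    ∃ c > 0, ∃ μ₀ : ℝ, ∀ μ : ℝ, μ₀ ≤ μ → ∀ u : EuclideanSpace 𝕜 σ, ‖u‖ = 1 →
      c * μ ^ d ≤ ∑ i, ‖eval (weightedDilation k (μ : 𝕜) u) (pderiv i (W + V))‖ ^ 2 := by
  obtain ⟨c, hc, hcW⟩ := exists_pos_le_norm_eval_pderiv_of_norm_eq_one hnd
  set M := ∑ i, coeffNormSum (pderiv i V)
  refine ⟨c ^ 2 / 4, by positivity, max 1 (2 * M / c), fun μ hμ u hu => ?_⟩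
  have hμ1 : 1 ≤ μ := le_of_max_le_left hμ
  have hμM : 2 * M ≤ μ * c := by
    have := le_of_max_le_right hμ
    rwa [div_le_iff₀ hc] at this
  have hnormμ : ‖(μ : 𝕜)‖ = μ := by rw [RCLike.norm_ofReal, abs_of_nonneg (by linarith)]
  obtain ⟨i, hi⟩ := hcW u hu
  have hMi : coeffNormSum (pderiv i V) ≤ M :=
    single_le_sum (f := fun i => coeffNormSum (pderiv i V))
      (fun j _ => sum_nonneg fun _ _ => norm_nonneg _) (mem_univ i)
  have hki := hk i
  have h2ki := h2k i
  have hP : IsWeightedHomogeneous k (pderiv i W) (d - k i - 1 + 1) := hW.pderiv (by omega)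
  have hQ : weightedTotalDegree k (pderiv i V) ≤ d - k i - 1 :=
    (weightedTotalDegree_pderiv_le k V i).trans (by omega)
  have hdom := norm_eval_weightedDilation_add_ge hP hQ (μ := (μ : 𝕜)) (by rw [hnormμ]; exact hμ1)
    (fun j => (PiLp.norm_apply_le u j).trans hu.le) (by rw [hnormμ]; nlinarith)
  rw [← map_add, hnormμ] at hdom
  have hexp : d ≤ 2 * (d - k i - 1 + 1) := by omega
  calc c ^ 2 / 4 * μ ^ d ≤ (μ ^ (d - k i - 1 + 1) * ‖eval (u : σ → 𝕜) (pderiv i W)‖ / 2) ^ 2 := by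
        rw [div_pow, mul_pow, ← pow_mul, mul_comm (d - k i - 1 + 1)]
        have := mul_le_mul (pow_le_pow_right₀ hμ1 hexp) (pow_le_pow_left₀ hc.le hi 2)
          (by positivity) (by positivity)
        linarith
    _ ≤ ‖eval (weightedDilation k (μ : 𝕜) u) (pderiv i (W + V))‖ ^ 2 := by gcongr
    _ ≤ _ := single_le_sum
        (f := fun i => ‖eval (weightedDilation k (μ : 𝕜) u) (pderiv i (W + V))‖ ^ 2)
        (fun _ _ => by positivity) (mem_univ i)

theorem sum_norm_eval_pderiv_pderiv_le {F : MvPolynomial σ 𝕜} (hk : ∀ i, 0 < k i)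
    (hF : weightedTotalDegree k F ≤ d) {μ : 𝕜} (hμ : 1 ≤ ‖μ‖) {u : σ → 𝕜}
    (hu : ∀ i, ‖u i‖ ≤ 1) :
    ∑ i, ∑ j, ‖eval (weightedDilation k μ u) (pderiv i (pderiv j F))‖ ≤
      (∑ i, ∑ j, coeffNormSum (pderiv i (pderiv j F))) * ‖μ‖ ^ (d - 2) := by
  simp_rw [sum_mul]
  refine sum_le_sum fun i _ => sum_le_sum fun j _ => norm_eval_weightedDilation_le ?_ hμ hu
  have := weightedTotalDegree_pderiv_le k F j
  have := weightedTotalDegree_pderiv_le k (pderiv j F) i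
  have := hk i
  have := hk j
  omega

theorem strong_tameness_of_isWeightedHomogeneous_add [Nonempty σ] {W V : MvPolynomial σ 𝕜}
    (hk : ∀ i, 0 < k i) (h2k : ∀ i, 2 * k i ≤ d) (hW : IsWeightedHomogeneous k W d)
    (hnd : ∀ z : σ → 𝕜, (∀ i, eval z (pderiv i W) = 0) → z = 0)
    (hV : weightedTotalDegree k V < d) {C : ℝ} (hC : 0 ≤ C) (K : ℝ) :
    ∃ R > 0, ∀ z : EuclideanSpace 𝕜 σ, R ≤ ‖z‖ →
      K ≤ ∑ i, ‖eval (z : σ → 𝕜) (pderiv i (W + V))‖ ^ 2 -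
        C * ∑ i, ∑ j, ‖eval (z : σ → 𝕜) (pderiv i (pderiv j (W + V)))‖ := by
  obtain ⟨c, hc, μ₀, hgrad⟩ := exists_pos_mul_pow_le_sum_norm_sq_eval_pderiv hk h2k hW hnd hV
  set C₂ := ∑ i, ∑ j, coeffNormSum (pderiv i (pderiv j (W + V)))
  have hF : weightedTotalDegree k (W + V) ≤ d := by
    classical
    refine Finset.sup_le fun m hm => ?_
    rcases Finset.mem_union.mp (support_add hm) with hm | hm
    · exact (hW (mem_support_iff.mp hm)).le
    · exact (le_weightedTotalDegree k hm).trans hV.le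
  have hd : 2 ≤ d := by
    obtain ⟨i⟩ := ‹Nonempty σ›
    linarith [hk i, h2k i]
  have hlarge : ∀ᶠ μ in Filter.atTop, C * C₂ + |K| ≤ c * μ ^ 2 ∧ μ₀ ≤ μ :=
    (((Filter.tendsto_pow_atTop two_ne_zero).const_mul_atTop hc).eventually_ge_atTop _).and
      (Filter.eventually_ge_atTop μ₀)
  obtain ⟨μ₁, hμ₁⟩ := Filter.eventually_atTop.mp hlarge
  set ν := max μ₁ 1
  refine ⟨ν ^ d, by positivity, fun z hz => ?_⟩
  obtain ⟨μ, u, hμ1, hu, hzu, hzμ⟩ :=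
    exists_eq_weightedDilation (n := d) hk (fun i => by linarith [h2k i]) z
      ((one_le_pow₀ (le_max_right _ _)).trans hz)
  have hνμ : ν ≤ μ :=
    (pow_le_pow_iff_left₀ (by positivity) (by positivity) (by omega)).mp (hz.trans hzμ)
  obtain ⟨hcμ, hμ₀⟩ := hμ₁ μ ((le_max_left _ _).trans hνμ)
  have hnormμ : ‖(μ : 𝕜)‖ = μ := by rw [RCLike.norm_ofReal, abs_of_nonneg (by linarith)]
  have hhess := sum_norm_eval_pderiv_pderiv_le (F := W + V) hk hF (μ := (μ : 𝕜))
    (by rw [hnormμ]; exact hμ1) (fun j => (PiLp.norm_apply_le u j).trans hu.le)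
  rw [hnormμ] at hhess
  have hpow : μ ^ d = μ ^ (d - 2) * μ ^ 2 := by rw [← pow_add, Nat.sub_add_cancel hd]
  rw [hzu]
  calc K ≤ c * μ ^ 2 - C * C₂ := by linarith [le_abs_self K]
    _ ≤ μ ^ (d - 2) * (c * μ ^ 2 - C * C₂) :=
        le_mul_of_one_le_left (by linarith [abs_nonneg K]) (one_le_pow₀ hμ1)
    _ = c * μ ^ d - C * (C₂ * μ ^ (d - 2)) := by rw [hpow]; ring
    _ ≤ _ := sub_le_sub (hgrad μ hμ₀ u hu) (mul_le_mul_of_nonneg_left hhess hC)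

end StrongTameness

theorem two_mul_le_of_div_le_half {k d : ℕ} (hd : 0 < d) (h : (k : ℚ) / d ≤ 1 / 2) :
    2 * k ≤ d := by
  rw [div_le_div_iff₀ (by exact_mod_cast hd) two_pos] at h
  exact_mod_cast (by push_cast; linarith : ((2 * k : ℕ) : ℚ) ≤ d)

theorem weight_lt_of_sum_div_mul_lt_one {σ : Type*} [Fintype σ] {k : σ → ℕ} {d : ℕ}
    (hd : 0 < d) (m : σ →₀ ℕ) (h : ∑ i, (k i : ℚ) / d * m i < 1) : Finsupp.weight k m < d := by
  have hweight : ∑ i, (k i : ℚ) / d * m i = (Finsupp.weight k m : ℚ) / d := by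
    rw [Finsupp.weight_eq_sum, Nat.cast_sum, sum_div]
    exact sum_congr rfl fun i _ => by rw [smul_eq_mul, Nat.cast_mul]; ring
  rw [hweight, div_lt_one (by exact_mod_cast hd)] at h
  exact_mod_cast h

theorem strong_tameness_lower_deformation_general
    (N : ℕ) (hN : 1 ≤ N) (W : MvPolynomial (Fin N) ℂ)
    (q : Fin N → ℚ) (k : Fin N → ℕ) (d : ℕ)
    (hk : ∀ i, 0 < k i) (hd : 0 < d)
    (hq : ∀ i, q i = (k i : ℚ) / (d : ℚ))
    (hhom : ∀ (lam : ℂ) (z : Fin N → ℂ),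
      eval (fun i => lam ^ (k i) * z i) W = lam ^ d * eval z W)
    (hnd : ∀ z : Fin N → ℂ, (∀ i, eval z (pderiv i W) = 0) → z = 0)
    (hhalf : ∀ i, q i ≤ 1 / 2)
    (m : ℕ) (a : Fin m → (Fin N →₀ ℕ))
    (hweight : ∀ j, (∑ i, q i * ((a j) i : ℚ)) < 1) :
    ∀ t : Fin m → ℂ, ∀ C : ℝ, 0 < C → ∀ K : ℝ, ∃ R : ℝ, 0 < R ∧
      ∀ z : EuclideanSpace ℂ (Fin N), R ≤ ‖z‖ →
        K ≤ (∑ i, ‖eval (z : Fin N → ℂ)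
                (pderiv i (W + ∑ j, MvPolynomial.C (t j) * monomial (a j) 1))‖ ^ 2)
            - C * ∑ i, ∑ j', ‖eval (z : Fin N → ℂ)
                (pderiv i (pderiv j' (W + ∑ j, MvPolynomial.C (t j) * monomial (a j) 1)))‖ := by
  intro t C hC K
  have : Nonempty (Fin N) := ⟨⟨0, hN⟩⟩
  refine strong_tameness_of_isWeightedHomogeneous_add hk
    (fun i => two_mul_le_of_div_le_half hd (hq i ▸ hhalf i))
    (isWeightedHomogeneous_of_eval_weightedDilation_two fun z => hhom 2 z) hnd
    (weightedTotalDegree_sum_C_mul_monomial_lt t hd fun j => ?_) hC.le K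
  exact weight_lt_of_sum_div_mul_lt_one hd _ (by simpa only [hq] using hweight j)

/-- **Strong tameness of the lower deformation `F(z,t) = W(z) + Σⱼ tⱼ Gⱼ(z)`.**
If `W` is a nondegenerate quasi-homogeneous polynomial of type `(q₁,…,q_N)` with all
weights `qᵢ ≤ 1/2`, and `G₁,…,G_m` are monomials of quasi-homogeneous weight `< 1`,
then for every fixed `t ∈ ℂ^m` and every `C > 0` one has
`|∇F(z,t)|² − C·|∇²F(z,t)| → ∞` as `‖z‖ → ∞` in `ℂ^N`. -/
theorem strong_tameness_lower_deformation
    (N : ℕ) (hN : 1 ≤ N) (W : MvPolynomial (Fin N) ℂ)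
    (q : Fin N → ℚ) (k : Fin N → ℕ) (d : ℕ)
    (hk : ∀ i, 0 < k i) (hd : 0 < d)
    (hq : ∀ i, q i = (k i : ℚ) / (d : ℚ))
    (hq0 : ∀ i, 0 < q i) (hq1 : ∀ i, q i < 1)
    (hhom : ∀ (lam : ℂ) (z : Fin N → ℂ),
      eval (fun i => lam ^ (k i) * z i) W = lam ^ d * eval z W)
    (hnd : ∀ z : Fin N → ℂ, (∀ i, eval z (pderiv i W) = 0) → z = 0)
    (hhalf : ∀ i, q i ≤ 1 / 2)
    (m : ℕ) (a : Fin m → (Fin N →₀ ℕ))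
    (hweight : ∀ j, (∑ i, q i * ((a j) i : ℚ)) < 1) :
    ∀ t : Fin m → ℂ, ∀ C : ℝ, 0 < C → ∀ K : ℝ, ∃ R : ℝ, 0 < R ∧
      ∀ z : EuclideanSpace ℂ (Fin N), R ≤ ‖z‖ →
        K ≤ (∑ i, ‖eval (z : Fin N → ℂ)
                (pderiv i (W + ∑ j, MvPolynomial.C (t j) * monomial (a j) 1))‖ ^ 2)
            - C * ∑ i, ∑ j', ‖eval (z : Fin N → ℂ)
                (pderiv i (pderiv j' (W + ∑ j, MvPolynomial.C (t j) * monomial (a j) 1)))‖ :=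
  strong_tameness_lower_deformation_general N hN W q k d hk hd hq hhom hnd hhalf m a hweight
end

section
/- Let f be a convenient and nondegenerate Laurent polynomial on the algebraic torus (ℂ*)ⁿ. Then f is strongly tame with respect to the metric i·Σᵢ (dzⁱ/zⁱ) ∧ (dz̄ⁱ/z̄ⁱ): for every constant C > 0, Σᵢ|zᵢ·∂f/∂zᵢ(z)|² − C·Σ_{i,j}|zᵢ·∂/∂zᵢ(z_j·∂f/∂z_j)(z)| → ∞ as the point z goes to infinity in the torus, i.e. for every C > 0 and K ∈ ℝ there is R > 0 such that Σᵢ|log|zᵢ|| ≥ R implies Σᵢ|zᵢ∂f/∂zᵢ(z)|² − C·Σ_{i,j}|zᵢ∂/∂zᵢ(z_j∂f/∂z_j)(z)| ≥ K. -/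
/-!
Suppose the estimate fails along points `z_k` escaping to infinity, and put
`M_k = max_{α ∈ A} ⟨α, log |z_k|⟩`; convenience makes `M_k` grow like `Σ |log |z_{k,i}||`.
Every `zᵢ∂ᵢ(z_j∂_j f)` is `O(e^{M_k})`, so the failing estimate forces
`e^{-M_k} · z_j∂_j f(z_k) → 0`. After passing to a subsequence, the gaps `⟨α, log |z_k|⟩ - M_k`
converge on a set `S ⊆ A` and tend to `-∞` on `A \ S`. The affine span of `S`, where these gaps
converge, is disjoint from the convex hull of `A \ S`, where they tend to `-∞`, so Hahn–Banach
gives `l` with `⟨α, l⟩ = m` on `S` and `< m` on `A \ S`: `S` is the set of lattice points of an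
exposed face, and `m > 0` by convenience. On `S` the limits of the gaps are affine, hence the
rescaled monomials converge to `ζ ^ α` for a point `ζ` of the torus, and vanish off `S`.
So all `z_j∂_j f^S` vanish at `ζ`, Euler's identity for the weight `l` gives `f^S(ζ) = 0`, and
then `S` has at least two points: this contradicts nondegeneracy.
-/

open Finset
open scoped Classical
open Filter Topology

section ConvexGeometry

variable {ι : Type*} {n : ℕ}

noncomputable def supportFun {A : Finset ι} (hA : A.Nonempty) (a : ι → Fin n → ℝ)
    (t : Fin n → ℝ) : ℝ :=
  A.sup' hA fun α => a α ⬝ᵥ t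

variable {A : Finset ι} (hA : A.Nonempty) {a : ι → Fin n → ℝ}

theorem le_supportFun {α : ι} (hα : α ∈ A) (t : Fin n → ℝ) : a α ⬝ᵥ t ≤ supportFun hA a t :=
  le_sup' (fun α => a α ⬝ᵥ t) hα

theorem exists_dotProduct_eq_supportFun (t : Fin n → ℝ) :
    ∃ α ∈ A, a α ⬝ᵥ t = supportFun hA a t := by
  obtain ⟨α, hα, h⟩ := exists_mem_eq_sup' hA fun α => a α ⬝ᵥ t
  exact ⟨α, hα, h.symm⟩

theorem dotProduct_le_of_mem_convexHull {s : Set (Fin n → ℝ)} {t x : Fin n → ℝ} {m : ℝ}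
    (h : ∀ y ∈ s, y ⬝ᵥ t ≤ m) (hx : x ∈ convexHull ℝ s) : x ⬝ᵥ t ≤ m :=
  convexHull_min h (convex_halfSpace_le ((dotProductBilin ℝ ℝ).flip t).isLinear m) hx

theorem exists_pos_mul_sum_abs_le_supportFun
    (hconv : (0 : Fin n → ℝ) ∈ interior (convexHull ℝ (a '' A))) :
    ∃ δ > 0, ∀ t : Fin n → ℝ, δ * ∑ i, |t i| ≤ supportFun hA a t := by
  obtain ⟨ε, hε, hball⟩ := Metric.mem_nhds_iff.mp (mem_interior_iff_mem_nhds.mp hconv)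
  refine ⟨ε / 2, by positivity, fun t => ?_⟩
  set x : Fin n → ℝ := fun i => if 0 ≤ t i then ε / 2 else -(ε / 2)
  have hx : x ∈ convexHull ℝ (a '' A) := by
    refine hball (mem_ball_zero_iff.mpr (lt_of_le_of_lt ?_ (half_lt_self hε)))
    refine (pi_norm_le_iff_of_nonneg (by positivity)).mpr fun i => ?_
    by_cases h : 0 ≤ t i <;> simp [x, h, abs_of_pos hε]
  have hxt : x ⬝ᵥ t = ε / 2 * ∑ i, |t i| := by
    rw [dotProduct, mul_sum]
    refine sum_congr rfl fun i _ => ?_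
    by_cases h : 0 ≤ t i
    · simp [x, h, abs_of_nonneg h]
    · simp [x, h, abs_of_neg (not_le.mp h)]
  rw [← hxt]
  exact dotProduct_le_of_mem_convexHull
    (Set.forall_mem_image.mpr fun α hα => le_supportFun hA hα t) hx

theorem supportFun_pos (hconv : (0 : Fin n → ℝ) ∈ interior (convexHull ℝ (a '' A)))
    {t : Fin n → ℝ} (ht : t ≠ 0) : 0 < supportFun hA a t := by
  obtain ⟨δ, hδ, hle⟩ := exists_pos_mul_sum_abs_le_supportFun hA hconv
  obtain ⟨i, hi⟩ := Function.ne_iff.mp ht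
  have : 0 < ∑ i, |t i| :=
    (abs_pos.mpr hi).trans_le (single_le_sum (fun j _ => abs_nonneg (t j)) (mem_univ i))
  exact (mul_pos hδ this).trans_le (hle t)

theorem tendsto_supportFun_atTop (hconv : (0 : Fin n → ℝ) ∈ interior (convexHull ℝ (a '' A)))
    {t : ℕ → Fin n → ℝ} (ht : Tendsto (fun k => ∑ i, |t k i|) atTop atTop) :
    Tendsto (fun k => supportFun hA a (t k)) atTop atTop := by
  obtain ⟨δ, hδ, hle⟩ := exists_pos_mul_sum_abs_le_supportFun hA hconv
  exact tendsto_atTop_mono (fun k => hle (t k)) (ht.const_mul_atTop hδ)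

end ConvexGeometry

section Separation

variable {E : Type*} [AddCommGroup E] [Module ℝ E]

theorem AffineSubspace.apply_eq_of_forall_lt_apply {P : AffineSubspace ℝ E} (f : E →ₗ[ℝ] ℝ)
    {v : ℝ} (hf : ∀ x ∈ P, v < f x) {x y : E} (hx : x ∈ P) (hy : y ∈ P) : f x = f y := by
  by_contra hne
  have hline := hf _ (AffineMap.lineMap_mem ((v - f x) / (f y - f x)) hx hy)
  rw [AffineMap.lineMap_apply, vsub_eq_sub, vadd_eq_add, map_add, map_smul, map_sub,
    smul_eq_mul, div_mul_cancel₀ _ (sub_ne_zero.mpr (Ne.symm hne))] at hline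
  linarith

variable [TopologicalSpace E] [IsTopologicalAddGroup E] [ContinuousSMul ℝ E]
  [LocallyConvexSpace ℝ E]

theorem AffineSubspace.exists_eq_and_lt_of_disjoint {P : AffineSubspace ℝ E} {K : Set E}
    (hP : (P : Set E).Nonempty) (hPc : IsClosed (P : Set E)) (hK : Convex ℝ K)
    (hKc : IsCompact K) (hdisj : Disjoint K P) :
    ∃ f : StrongDual ℝ E, ∃ m : ℝ, (∀ x ∈ P, f x = m) ∧ ∀ x ∈ K, f x < m := by
  obtain ⟨f, u, v, hfK, huv, hfP⟩ :=
    geometric_hahn_banach_compact_closed hK hKc P.convex hPc hdisj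
  obtain ⟨x₀, hx₀⟩ := hP
  refine ⟨f, f x₀, fun x hx => P.apply_eq_of_forall_lt_apply (f : E →ₗ[ℝ] ℝ) hfP hx hx₀,
    fun x hx => (hfK x hx).trans (huv.trans (hfP x₀ hx₀))⟩

end Separation

section SupportingFace

variable {ι : Type*} {n : ℕ}

structure IsSupportingFace (A S : Finset ι) (a : ι → Fin n → ℝ) (l : Fin n → ℝ) (m : ℝ) :
    Prop where
  subset : S ⊆ A
  nonempty : S.Nonempty
  eq_on : ∀ α ∈ S, a α ⬝ᵥ l = m
  lt_off : ∀ α ∈ A \ S, a α ⬝ᵥ l < m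

theorem IsSupportingFace.dotProduct_le {A S : Finset ι} {a : ι → Fin n → ℝ} {l : Fin n → ℝ}
    {m : ℝ} (h : IsSupportingFace A S a l m) {α : ι} (hα : α ∈ A) : a α ⬝ᵥ l ≤ m := by
  by_cases hαS : α ∈ S
  · exact (h.eq_on α hαS).le
  · exact (h.lt_off α (mem_sdiff.mpr ⟨hα, hαS⟩)).le

noncomputable def dotProductCLM (l : Fin n → ℝ) : StrongDual ℝ (Fin n → ℝ) :=
  LinearMap.toContinuousLinearMap ((dotProductBilin ℝ ℝ).flip l)

@[simp]
theorem dotProductCLM_apply (l x : Fin n → ℝ) : dotProductCLM l x = x ⬝ᵥ l := rfl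

theorem IsSupportingFace.filter_mem_toExposed {A S : Finset ι} {a : ι → Fin n → ℝ}
    {l : Fin n → ℝ} {m : ℝ} (h : IsSupportingFace A S a l m) :
    A.filter (fun α => a α ∈ (dotProductCLM l).toExposed (convexHull ℝ (a '' A))) = S := by
  ext α
  rw [mem_filter]
  constructor
  · rintro ⟨hαA, -, hmax⟩
    simp only [dotProductCLM_apply] at hmax
    obtain ⟨β, hβ⟩ := h.nonempty
    by_contra hαS
    have := hmax _ (subset_convexHull ℝ _ (Set.mem_image_of_mem a (h.subset hβ)))
    linarith [h.eq_on β hβ, h.lt_off α (mem_sdiff.mpr ⟨hαA, hαS⟩)]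
  · intro hα
    refine ⟨h.subset hα, subset_convexHull ℝ _ (Set.mem_image_of_mem a (h.subset hα)),
      fun y hy => ?_⟩
    rw [dotProductCLM_apply, dotProductCLM_apply, h.eq_on α hα]
    exact dotProduct_le_of_mem_convexHull
      (Set.forall_mem_image.mpr fun β hβ => h.dotProduct_le hβ) hy

theorem IsSupportingFace.finrank_vectorSpan_toExposed_pos {A S : Finset ι}
    {a : ι → Fin n → ℝ} {l : Fin n → ℝ} {m : ℝ} (h : IsSupportingFace A S a l m)
    (ha : Set.InjOn a S) (hS : 1 < S.card) :
    0 < Module.finrank ℝ (vectorSpan ℝ ((dotProductCLM l).toExposed (convexHull ℝ (a '' A)))) := by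
  obtain ⟨α, β, hα, hβ, hαβ⟩ := one_lt_card_iff.mp hS
  have hmem : ∀ γ ∈ S, a γ ∈ (dotProductCLM l).toExposed (convexHull ℝ (a '' A)) := by
    intro γ hγ
    rw [← h.filter_mem_toExposed] at hγ
    exact (mem_filter.mp hγ).2
  refine Nat.pos_of_ne_zero fun h0 => hαβ (ha hα hβ ?_)
  exact (vectorSpan_eq_bot_iff_subsingleton _).mp (Submodule.finrank_eq_zero.mp h0)
    (hmem α hα) (hmem β hβ)

end SupportingFace

section TropicalLimit

variable {ι : Type*} {n : ℕ} {a : ι → Fin n → ℝ} {t : ℕ → Fin n → ℝ} {M : ℕ → ℝ}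

theorem exists_tendsto_of_mem_affineSpan {S : Set ι} {y : ι → ℝ}
    (hS : ∀ α ∈ S, Tendsto (fun k => a α ⬝ᵥ t k - M k) atTop (𝓝 (y α)))
    {x : Fin n → ℝ} (hx : x ∈ affineSpan ℝ (a '' S)) :
    ∃ L, Tendsto (fun k => x ⬝ᵥ t k - M k) atTop (𝓝 L) := by
  refine affineSpan_induction (p := fun x => ∃ L, Tendsto (fun k => x ⬝ᵥ t k - M k) atTop (𝓝 L))
    hx ?_ ?_
  · rintro _ ⟨α, hα, rfl⟩
    exact ⟨_, hS α hα⟩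
  · rintro c u v w ⟨Lu, hu⟩ ⟨Lv, hv⟩ ⟨Lw, hw⟩
    refine ⟨c * (Lu - Lv) + Lw, ?_⟩
    convert ((hu.sub hv).const_mul c).add hw using 2 with k
    simp only [vsub_eq_sub, vadd_eq_add, add_dotProduct, smul_dotProduct, sub_dotProduct,
      smul_eq_mul]
    ring

theorem tendsto_atBot_of_mem_convexHull {B : Finset ι}
    (hB : ∀ α ∈ B, Tendsto (fun k => a α ⬝ᵥ t k - M k) atTop atBot)
    {x : Fin n → ℝ} (hx : x ∈ convexHull ℝ (a '' B)) :
    Tendsto (fun k => x ⬝ᵥ t k - M k) atTop atBot := by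
  refine tendsto_atBot.mpr fun R => ?_
  filter_upwards [(eventually_all_finset B).mpr fun α hα => tendsto_atBot.mp (hB α hα) R]
    with k hk
  have := dotProduct_le_of_mem_convexHull (t := t k) (m := R + M k)
    (Set.forall_mem_image.mpr fun α hα => by linarith [hk α hα]) hx
  linarith

theorem sdiff_nonempty_of_tendsto_atTop {A S : Finset ι} {y : ι → ℝ}
    (hS : ∀ α ∈ S, Tendsto (fun k => a α ⬝ᵥ t k - M k) atTop (𝓝 (y α)))
    (hM : Tendsto M atTop atTop) (h0 : (0 : Fin n → ℝ) ∈ convexHull ℝ (a '' A)) :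
    (A \ S).Nonempty := by
  by_contra hB
  rw [not_nonempty_iff_eq_empty, sdiff_eq_empty_iff_subset] at hB
  obtain ⟨L, hL⟩ := exists_tendsto_of_mem_affineSpan hS
    (affineSpan_mono ℝ (Set.image_mono hB) (convexHull_subset_affineSpan _ h0))
  simp only [zero_dotProduct, zero_sub] at hL
  exact not_tendsto_atBot_of_tendsto_nhds hL (tendsto_neg_atTop_atBot.comp hM)

theorem nonempty_of_tendsto_atBot {A S : Finset ι} (hA : A.Nonempty)
    (hB : ∀ α ∈ A \ S, Tendsto (fun k => a α ⬝ᵥ t k - supportFun hA a (t k)) atTop atBot) :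
    S.Nonempty := by
  by_contra hS
  rw [not_nonempty_iff_eq_empty] at hS
  subst hS
  rw [sdiff_empty] at hB
  obtain ⟨k, hk⟩ :=
    ((eventually_all_finset A).mpr fun α hα => (hB α hα).eventually_lt_atBot 0).exists
  obtain ⟨α, hα, heq⟩ := exists_dotProduct_eq_supportFun hA (t k)
  linarith [hk α hα]

theorem exists_isSupportingFace {A S : Finset ι} (hA : A.Nonempty)
    (hconv : (0 : Fin n → ℝ) ∈ interior (convexHull ℝ (a '' A))) (hSA : S ⊆ A) {y : ι → ℝ}
    (hS : ∀ α ∈ S, Tendsto (fun k => a α ⬝ᵥ t k - supportFun hA a (t k)) atTop (𝓝 (y α)))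
    (hB : ∀ α ∈ A \ S, Tendsto (fun k => a α ⬝ᵥ t k - supportFun hA a (t k)) atTop atBot)
    (hM : Tendsto (fun k => supportFun hA a (t k)) atTop atTop) :
    ∃ l m, 0 < m ∧ IsSupportingFace A S a l m := by
  have hSne := nonempty_of_tendsto_atBot hA hB
  obtain ⟨β, hβ⟩ := sdiff_nonempty_of_tendsto_atTop hS hM (interior_subset hconv)
  have hdisj : Disjoint (convexHull ℝ (a '' ↑(A \ S))) (affineSpan ℝ (a '' S) : Set _) :=
    Set.disjoint_left.mpr fun x hxK hxP => by
      obtain ⟨L, hL⟩ := exists_tendsto_of_mem_affineSpan hS hxP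
      exact not_tendsto_atBot_of_tendsto_nhds hL (tendsto_atBot_of_mem_convexHull hB hxK)
  obtain ⟨f, m, hfP, hfK⟩ := AffineSubspace.exists_eq_and_lt_of_disjoint
    ((hSne.to_set.image a).mono (subset_affineSpan ℝ _))
    (AffineSubspace.closed_of_finiteDimensional _) (convex_convexHull ℝ _)
    (((A \ S).finite_toSet.image a).isCompact_convexHull ℝ) hdisj
  set l : Fin n → ℝ := fun i => f fun j => if i = j then 1 else 0
  have hf : ∀ x, f x = x ⬝ᵥ l := LinearMap.pi_apply_eq_sum_univ (f : (Fin n → ℝ) →ₗ[ℝ] ℝ)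
  have hlS : ∀ α ∈ S, a α ⬝ᵥ l = m := fun α hα =>
    (hf _).symm.trans (hfP _ (subset_affineSpan ℝ _ (Set.mem_image_of_mem a hα)))
  have hlB : ∀ α ∈ A \ S, a α ⬝ᵥ l < m := fun α hα =>
    hf (a α) ▸ hfK _ (subset_convexHull ℝ _ (Set.mem_image_of_mem a hα))
  have hface : IsSupportingFace A S a l m := ⟨hSA, hSne, hlS, hlB⟩
  obtain ⟨α, hα⟩ := hSne
  have hl : l ≠ 0 := fun hl0 => by
    have := hlB β hβ
    rw [hl0, dotProduct_zero, ← hlS α hα, hl0, dotProduct_zero] at this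
    exact lt_irrefl 0 this
  exact ⟨l, m, (supportFun_pos hA hconv hl).trans_le (sup'_le _ _ fun γ => hface.dotProduct_le),
    hface⟩

theorem exists_dotProduct_sub_eq_of_tendsto {S : Finset ι} {y : ι → ℝ}
    (h : ∀ α ∈ S, Tendsto (fun k => a α ⬝ᵥ t k - M k) atTop (𝓝 (y α))) :
    ∃ p q, ∀ α ∈ S, y α = a α ⬝ᵥ p - q := by
  -- the functions `α ↦ ⟨a α, p⟩ - q` on `S` form a finite-dimensional, hence closed, subspace
  let T : (Fin n → ℝ) × ℝ →ₗ[ℝ] (S → ℝ) := LinearMap.pi fun α =>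
    (dotProductBilin ℝ ℝ (a α)).comp (LinearMap.fst ℝ _ ℝ) - LinearMap.snd ℝ _ ℝ
  have hy : (fun α : S => y α) ∈ LinearMap.range T :=
    (LinearMap.range T).closed_of_finiteDimensional.mem_of_tendsto
      (tendsto_pi_nhds.mpr fun α => h α α.2) (Eventually.of_forall fun k => ⟨(t k, M k), rfl⟩)
  obtain ⟨⟨p, q⟩, hpq⟩ := hy
  exact ⟨p, q, fun α hα => (congrFun hpq ⟨α, hα⟩).symm⟩

theorem exists_subseq_tendsto_or_tendsto_atBot (A : Finset ι) (x : ℕ → ι → ℝ)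
    (hx : ∀ k, ∀ α ∈ A, x k α ≤ 0) :
    ∃ φ : ℕ → ℕ, StrictMono φ ∧ ∃ S ⊆ A, ∃ y : ι → ℝ,
      (∀ α ∈ S, Tendsto (fun k => x (φ k) α) atTop (𝓝 (y α))) ∧
      ∀ α ∈ A \ S, Tendsto (fun k => x (φ k) α) atTop atBot := by
  obtain ⟨L, φ, hφ, hL⟩ := CompactSpace.tendsto_subseq fun k (α : A) => (x k α : EReal)
  have hLα : ∀ α (hα : α ∈ A), Tendsto (fun k => (x (φ k) α : EReal)) atTop (𝓝 (L ⟨α, hα⟩)) :=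
    fun α hα => ((continuous_apply _).tendsto _).comp hL
  refine ⟨φ, hφ, A.filter fun α => ∃ hα : α ∈ A, L ⟨α, hα⟩ ≠ ⊥, filter_subset _ _,
    fun α => if hα : α ∈ A then (L ⟨α, hα⟩).toReal else 0, fun α hα => ?_, fun α hα => ?_⟩
  · obtain ⟨-, hαA, hbot⟩ := mem_filter.mp hα
    have htop : L ⟨α, hαA⟩ ≠ ⊤ := ne_top_of_le_ne_top EReal.zero_ne_top
      (le_of_tendsto' (hLα α hαA) fun k => EReal.coe_nonpos.mpr (hx _ α hαA))
    dsimp only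
    rw [dif_pos hαA, ← EReal.tendsto_coe, EReal.coe_toReal htop hbot]
    exact hLα α hαA
  · obtain ⟨hαA, hαS⟩ := mem_sdiff.mp hα
    have hbot : L ⟨α, hαA⟩ = ⊥ := by
      by_contra hne
      exact hαS (mem_filter.mpr ⟨hαA, hαA, hne⟩)
    rw [← EReal.tendsto_coe_nhds_bot_iff, ← hbot]
    exact hLα α hαA

theorem exists_subseq_isSupportingFace {A : Finset ι} (hA : A.Nonempty)
    (hconv : (0 : Fin n → ℝ) ∈ interior (convexHull ℝ (a '' A)))
    (hM : Tendsto (fun k => supportFun hA a (t k)) atTop atTop) :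
    ∃ φ : ℕ → ℕ, StrictMono φ ∧ ∃ S l m, 0 < m ∧ IsSupportingFace A S a l m ∧ ∃ p q,
      (∀ α ∈ S, Tendsto (fun k => a α ⬝ᵥ t (φ k) - supportFun hA a (t (φ k))) atTop
        (𝓝 (a α ⬝ᵥ p - q))) ∧
      ∀ α ∈ A \ S, Tendsto (fun k => a α ⬝ᵥ t (φ k) - supportFun hA a (t (φ k))) atTop atBot := by
  obtain ⟨φ, hφ, S, hSA, y, hS, hB⟩ := exists_subseq_tendsto_or_tendsto_atBot A
    (fun k α => a α ⬝ᵥ t k - supportFun hA a (t k))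
    fun k α hα => sub_nonpos.mpr (le_supportFun hA hα _)
  obtain ⟨l, m, hm, hface⟩ :=
    exists_isSupportingFace hA hconv hSA hS hB (hM.comp hφ.tendsto_atTop)
  obtain ⟨p, q, hpq⟩ := exists_dotProduct_sub_eq_of_tendsto hS
  exact ⟨φ, hφ, S, l, m, hm, hface, p, q, fun α hα => hpq α hα ▸ hS α hα, hB⟩

end TropicalLimit

theorem tendsto_sum_mul_of_tendsto {ι R : Type*} [Semiring R] [TopologicalSpace R]
    [IsTopologicalSemiring R] {A S : Finset ι} (hSA : S ⊆ A) {f : ℕ → ι → R} {v : ι → R}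
    (hS : ∀ α ∈ S, Tendsto (fun k => f k α) atTop (𝓝 (v α)))
    (hB : ∀ α ∈ A \ S, Tendsto (fun k => f k α) atTop (𝓝 0)) (b : ι → R) :
    Tendsto (fun k => ∑ α ∈ A, b α * f k α) atTop (𝓝 (∑ α ∈ S, b α * v α)) := by
  simp_rw [← sum_sdiff hSA]
  simpa using (tendsto_finsetSum _ fun α hα => (hB α hα).const_mul (b α)).add
    (tendsto_finsetSum _ fun α hα => (hS α hα).const_mul (b α))

theorem tendsto_exp_neg_mul_of_sum_norm_sq_sub_lt {κ : Type*} [Fintype κ] {g : ℕ → κ → ℂ}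
    {H M : ℕ → ℝ} {C D K : ℝ} (hC : 0 ≤ C) (hg : ∀ k, ∑ i, ‖g k i‖ ^ 2 - C * H k < K)
    (hH : ∀ k, H k ≤ D * Real.exp (M k)) (hM : Tendsto M atTop atTop) (i : κ) :
    Tendsto (fun k => (Real.exp (-M k) : ℂ) * g k i) atTop (𝓝 0) := by
  have hε : Tendsto (fun k => Real.exp (-M k)) atTop (𝓝 0) :=
    Real.tendsto_exp_atBot.comp (tendsto_neg_atTop_atBot.comp hM)
  have hβ : Tendsto (fun k => K * Real.exp (-M k) ^ 2 + C * D * Real.exp (-M k)) atTop (𝓝 0) := by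
    simpa using ((hε.pow 2).const_mul K).add (hε.const_mul (C * D))
  refine squeeze_zero_norm (fun k => ?_) (by simpa using (Real.continuous_sqrt.tendsto 0).comp hβ)
  refine (le_abs_self _).trans (Real.abs_le_sqrt ?_)
  have hgi : ‖g k i‖ ^ 2 ≤ ∑ j, ‖g k j‖ ^ 2 :=
    single_le_sum (f := fun j => ‖g k j‖ ^ 2) (fun j _ => sq_nonneg _) (mem_univ i)
  have hexp : Real.exp (M k) * Real.exp (-M k) = 1 := by
    rw [← Real.exp_add, add_neg_cancel, Real.exp_zero]
  rw [norm_mul, Complex.norm_real, Real.norm_of_nonneg (Real.exp_pos _).le, mul_pow]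
  calc Real.exp (-M k) ^ 2 * ‖g k i‖ ^ 2
      ≤ Real.exp (-M k) ^ 2 * (K + C * (D * Real.exp (M k))) := by
        gcongr
        linarith [hg k, mul_le_mul_of_nonneg_left (hH k) hC]
    _ = K * Real.exp (-M k) ^ 2 + C * D * Real.exp (-M k) := by
        linear_combination C * D * Real.exp (-M k) * hexp

theorem one_lt_card_of_sum_eq_zero {ι M : Type*} [AddCommMonoid M] {S : Finset ι}
    (hS : S.Nonempty) {f : ι → M} (hf : ∀ α ∈ S, f α ≠ 0) (h : ∑ α ∈ S, f α = 0) :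
    1 < S.card := by
  by_contra hcard
  obtain ⟨α, rfl⟩ := card_eq_one.mp (le_antisymm (not_lt.mp hcard) hS.card_pos)
  exact hf α (mem_singleton_self α) (by simpa using h)

section Torus

variable {n : ℕ}

def castVec (α : Fin n → ℤ) : Fin n → ℝ := fun i => α i

theorem castVec_injective : Function.Injective (castVec (n := n)) :=
  fun _ _ h => funext fun i => by simpa [castVec] using congrFun h i

noncomputable def torusLog (z : Fin n → ℂ) : Fin n → ℝ := fun i => Real.log ‖z i‖

noncomputable def torusPhase (z : Fin n → ℂ) : Fin n → ℂ := fun i => z i / ‖z i‖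

theorem ofReal_exp_castVec_dotProduct (α : Fin n → ℤ) (r : Fin n → ℝ) :
    (Real.exp (castVec α ⬝ᵥ r) : ℂ) = ∏ l, (Real.exp (r l) : ℂ) ^ α l := by
  simp only [dotProduct, castVec, Real.exp_sum, Complex.ofReal_prod, Complex.ofReal_exp,
    ← Complex.exp_int_mul]
  push_cast
  rfl

theorem prod_exp_mul_zpow (r : Fin n → ℝ) (u : Fin n → ℂ) (α : Fin n → ℤ) :
    ∏ l, ((Real.exp (r l) : ℂ) * u l) ^ α l = Real.exp (castVec α ⬝ᵥ r) * ∏ l, u l ^ α l := by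
  rw [ofReal_exp_castVec_dotProduct, ← prod_mul_distrib]
  simp only [mul_zpow]

theorem norm_torusPhase {z : Fin n → ℂ} (hz : ∀ i, z i ≠ 0) (i : Fin n) : ‖torusPhase z i‖ = 1 := by
  simp [torusPhase, hz i]

theorem prod_zpow_eq_exp_mul_prod_torusPhase {z : Fin n → ℂ} (hz : ∀ i, z i ≠ 0) (α : Fin n → ℤ) :
    ∏ l, z l ^ α l = Real.exp (castVec α ⬝ᵥ torusLog z) * ∏ l, torusPhase z l ^ α l := by
  rw [← prod_exp_mul_zpow]
  refine prod_congr rfl fun l _ => ?_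
  rw [torusLog, torusPhase, Real.exp_log (norm_pos_iff.mpr (hz l)), mul_div_cancel₀]
  exact_mod_cast norm_ne_zero_iff.mpr (hz l)

theorem norm_prod_zpow {z : Fin n → ℂ} (hz : ∀ i, z i ≠ 0) (α : Fin n → ℤ) :
    ‖∏ l, z l ^ α l‖ = Real.exp (castVec α ⬝ᵥ torusLog z) := by
  simp [prod_zpow_eq_exp_mul_prod_torusPhase hz, norm_torusPhase hz]

theorem norm_sum_mul_prod_zpow_le {A : Finset (Fin n → ℤ)} (hA : A.Nonempty) {z : Fin n → ℂ}
    (hz : ∀ i, z i ≠ 0) (b : (Fin n → ℤ) → ℂ) :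
    ‖∑ α ∈ A, b α * ∏ l, z l ^ α l‖ ≤
      ∑ α ∈ A, ‖b α‖ * Real.exp (supportFun hA castVec (torusLog z)) := by
  refine (norm_sum_le _ _).trans (sum_le_sum fun α hα => ?_)
  rw [norm_mul, norm_prod_zpow hz]
  exact mul_le_mul_of_nonneg_left (Real.exp_le_exp.mpr (le_supportFun hA hα _)) (norm_nonneg _)

theorem tendsto_exp_sub_mul_prod_zpow {z : ℕ → Fin n → ℂ} (hz : ∀ k i, z k i ≠ 0)
    {w : Fin n → ℂ} (hw : ∀ i, w i ≠ 0) (hphase : Tendsto (fun k => torusPhase (z k)) atTop (𝓝 w))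
    {M : ℕ → ℝ} {q ρ : ℝ} {α : Fin n → ℤ}
    (hρ : Tendsto (fun k => Real.exp (q + (castVec α ⬝ᵥ torusLog (z k) - M k))) atTop (𝓝 ρ)) :
    Tendsto (fun k => (Real.exp (q - M k) : ℂ) * ∏ l, z k l ^ α l) atTop
      (𝓝 (ρ * ∏ l, w l ^ α l)) := by
  have h : ∀ k, (Real.exp (q - M k) : ℂ) * ∏ l, z k l ^ α l =
      Real.exp (q + (castVec α ⬝ᵥ torusLog (z k) - M k)) * ∏ l, torusPhase (z k) l ^ α l := by
    intro k
    rw [prod_zpow_eq_exp_mul_prod_torusPhase (hz k), ← mul_assoc, ← Complex.ofReal_mul,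
      ← Real.exp_add]
    ring_nf
  simp_rw [h]
  exact ((Complex.continuous_ofReal.tendsto _).comp hρ).mul (tendsto_finsetProd _ fun l _ =>
    (((continuous_apply l).tendsto w).comp hphase).zpow₀ _ (Or.inl (hw l)))

/-- Euler's identity for the weight `l`: `m · g = Σⱼ lⱼ · zⱼ∂ⱼg` for `g` supported on
`⟨α, l⟩ = m`. -/
theorem sum_mul_prod_zpow_eq_zero_of_dotProduct_eq {S : Finset (Fin n → ℤ)} {l : Fin n → ℝ}
    {m : ℝ} (hm : m ≠ 0) (hS : ∀ α ∈ S, castVec α ⬝ᵥ l = m) (b : (Fin n → ℤ) → ℂ)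
    (ζ : Fin n → ℂ) (hcrit : ∀ j, ∑ α ∈ S, b α * (α j : ℂ) * ∏ i, ζ i ^ α i = 0) :
    ∑ α ∈ S, b α * ∏ i, ζ i ^ α i = 0 := by
  have euler : (m : ℂ) * ∑ α ∈ S, b α * ∏ i, ζ i ^ α i =
      ∑ j, (l j : ℂ) * ∑ α ∈ S, b α * (α j : ℂ) * ∏ i, ζ i ^ α i := by
    simp_rw [mul_sum]
    rw [sum_comm]
    refine sum_congr rfl fun α hα => ?_
    rw [← hS α hα, dotProduct, Complex.ofReal_sum, sum_mul]
    refine sum_congr rfl fun j _ => ?_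
    simp only [castVec, Complex.ofReal_mul, Complex.ofReal_intCast]
    ring
  simpa [hcrit, hm] using euler

theorem exists_subseq_tendsto_face_sum {A : Finset (Fin n → ℤ)} (hA : A.Nonempty)
    (hconv : (0 : Fin n → ℝ) ∈ interior (convexHull ℝ (castVec '' A)))
    {z : ℕ → Fin n → ℂ} (hz : ∀ k i, z k i ≠ 0)
    (hM : Tendsto (fun k => supportFun hA castVec (torusLog (z k))) atTop atTop) :
    ∃ φ : ℕ → ℕ, StrictMono φ ∧ ∃ S l m, 0 < m ∧ IsSupportingFace A S castVec l m ∧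
      ∃ ζ : Fin n → ℂ, (∀ i, ζ i ≠ 0) ∧ ∃ q : ℝ, ∀ b : (Fin n → ℤ) → ℂ,
        Tendsto (fun k => (Real.exp (q - supportFun hA castVec (torusLog (z (φ k)))) : ℂ) *
          ∑ α ∈ A, b α * ∏ l, z (φ k) l ^ α l) atTop (𝓝 (∑ α ∈ S, b α * ∏ l, ζ l ^ α l)) := by
  obtain ⟨φ, hφ, S, l, m, hm, hface, p, q, hS, hB⟩ := exists_subseq_isSupportingFace hA hconv hM
  obtain ⟨w, hw, ψ, hψ, hphase⟩ :=
    (isCompact_univ_pi fun _ => isCompact_sphere (0 : ℂ) 1).tendsto_subseq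
      (x := fun k => torusPhase (z (φ k))) fun k =>
        Set.mem_univ_pi.mpr fun i => mem_sphere_zero_iff_norm.mpr (norm_torusPhase (hz _) i)
  have hw0 : ∀ i, w i ≠ 0 := fun i => ne_zero_of_mem_unit_sphere ⟨w i, Set.mem_univ_pi.mp hw i⟩
  refine ⟨φ ∘ ψ, hφ.comp hψ, S, l, m, hm, hface, fun i => Real.exp (p i) * w i,
    fun i => mul_ne_zero (Complex.ofReal_ne_zero.mpr (Real.exp_pos _).ne') (hw0 i), q, fun b => ?_⟩
  simp_rw [mul_sum, mul_left_comm _ (b _)]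
  refine tendsto_sum_mul_of_tendsto hface.subset (fun α hα => ?_) (fun α hα => ?_) b
  · rw [prod_exp_mul_zpow]
    refine tendsto_exp_sub_mul_prod_zpow (fun k => hz _) hw0 hphase ?_
    have hlim := ((hS α hα).comp hψ.tendsto_atTop).const_add q
    rw [add_sub_cancel] at hlim
    exact (Real.continuous_exp.tendsto _).comp hlim
  · simpa using tendsto_exp_sub_mul_prod_zpow (fun k => hz _) hw0 hphase
      (Real.tendsto_exp_atBot.comp
        (tendsto_atBot_add_const_left _ q ((hB α hα).comp hψ.tendsto_atTop)))

theorem exists_isSupportingFace_sum_eq_zero_of_tendsto {A : Finset (Fin n → ℤ)}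
    (hA : A.Nonempty) (hconv : (0 : Fin n → ℝ) ∈ interior (convexHull ℝ (castVec '' A)))
    {z : ℕ → Fin n → ℂ} (hz : ∀ k i, z k i ≠ 0)
    (hM : Tendsto (fun k => supportFun hA castVec (torusLog (z k))) atTop atTop) :
    ∃ S l m, 0 < m ∧ IsSupportingFace A S castVec l m ∧ ∃ ζ : Fin n → ℂ, (∀ i, ζ i ≠ 0) ∧
      ∀ b : (Fin n → ℤ) → ℂ,
        Tendsto (fun k => (Real.exp (-supportFun hA castVec (torusLog (z k))) : ℂ) *
          ∑ α ∈ A, b α * ∏ l, z k l ^ α l) atTop (𝓝 0) →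
        ∑ α ∈ S, b α * ∏ l, ζ l ^ α l = 0 := by
  obtain ⟨φ, hφ, S, l, m, hm, hface, ζ, hζ, q, hlim⟩ :=
    exists_subseq_tendsto_face_sum hA hconv hz hM
  refine ⟨S, l, m, hm, hface, ζ, hζ, fun b hb => tendsto_nhds_unique (hlim b) ?_⟩
  have h := (hb.comp hφ.tendsto_atTop).const_mul (Real.exp q : ℂ)
  rw [mul_zero] at h
  refine h.congr fun k => ?_
  simp only [Function.comp_apply, sub_eq_add_neg, Real.exp_add, Complex.ofReal_mul]
  ring

end Torus

theorem strong_tameness_laurent_general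
    (n : ℕ) (A : Finset (Fin n → ℤ)) (hA : A.Nonempty)
    (c : (Fin n → ℤ) → ℂ) (hc : ∀ α ∈ A, c α ≠ 0)
    -- `f` is convenient: `0` lies in the interior of the Newton polyhedron
    (hconv : (0 : Fin n → ℝ) ∈
      interior (convexHull ℝ ((fun (α : Fin n → ℤ) (i : Fin n) => (α i : ℝ)) '' A)))
    -- `f` is nondegenerate: for every face of positive dimension, the system
    -- `f^{Δ'} = f₁^{Δ'} = ⋯ = f_n^{Δ'} = 0` has no solution in the torus
    (hnd : ∀ F : Set (Fin n → ℝ),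
      IsExposed ℝ (convexHull ℝ ((fun (α : Fin n → ℤ) (i : Fin n) => (α i : ℝ)) '' A)) F →
      0 < Module.finrank ℝ (vectorSpan ℝ F) →
      ¬ ∃ z : Fin n → ℂ, (∀ i, z i ≠ 0) ∧
        (∑ α ∈ A.filter (fun α => (fun i => (α i : ℝ)) ∈ F),
            c α * ∏ i, z i ^ (α i)) = 0 ∧
        ∀ j, (∑ α ∈ A.filter (fun α => (fun i => (α i : ℝ)) ∈ F),
            c α * (α j : ℂ) * ∏ i, z i ^ (α i)) = 0) :
    ∀ C : ℝ, 0 < C → ∀ K : ℝ, ∃ R : ℝ, 0 < R ∧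
      ∀ z : Fin n → ℂ, (∀ i, z i ≠ 0) →
        R ≤ ∑ i, |Real.log ‖z i‖| →
        K ≤ (∑ i, ‖∑ α ∈ A, c α * (α i : ℂ) * ∏ l, z l ^ (α l)‖ ^ 2)
            - C * ∑ i, ∑ j,
                ‖∑ α ∈ A, c α * (α i : ℂ) * (α j : ℂ) * ∏ l, z l ^ (α l)‖ := by
  intro C hC K
  by_contra! hbad
  choose z hz hlog hK using fun k : ℕ => hbad (k + 1) (by positivity)
  have hM : Tendsto (fun k => supportFun hA castVec (torusLog (z k))) atTop atTop :=
    tendsto_supportFun_atTop hA hconv <| tendsto_atTop_mono hlog <|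
      tendsto_atTop_add_const_right _ 1 tendsto_natCast_atTop_atTop
  have hhess : ∀ k, ∑ i, ∑ j, ‖∑ α ∈ A, c α * α i * α j * ∏ l, z k l ^ α l‖ ≤
      (∑ i, ∑ j, ∑ α ∈ A, ‖c α * α i * α j‖) *
        Real.exp (supportFun hA castVec (torusLog (z k))) := fun k => by
    simp only [sum_mul]
    exact sum_le_sum fun i _ => sum_le_sum fun j _ => norm_sum_mul_prod_zpow_le hA (hz k) _
  obtain ⟨S, l, m, hm, hface, ζ, hζ, hlim⟩ :=
    exists_isSupportingFace_sum_eq_zero_of_tendsto hA hconv hz hM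
  have hcrit : ∀ j, ∑ α ∈ S, c α * (α j : ℂ) * ∏ i, ζ i ^ α i = 0 := fun j =>
    hlim _ (tendsto_exp_neg_mul_of_sum_norm_sq_sub_lt hC.le hK hhess hM j)
  have hval := sum_mul_prod_zpow_eq_zero_of_dotProduct_eq hm.ne' hface.eq_on c ζ hcrit
  have hcard := one_lt_card_of_sum_eq_zero hface.nonempty
    (fun α hα => mul_ne_zero (hc α (hface.subset hα))
      (prod_ne_zero_iff.mpr fun i _ => zpow_ne_zero _ (hζ i))) hval
  have hfilter : A.filter (fun α => (fun i => (α i : ℝ)) ∈ (dotProductCLM l).toExposed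
      (convexHull ℝ ((fun (α : Fin n → ℤ) (i : Fin n) => (α i : ℝ)) '' A))) = S :=
    hface.filter_mem_toExposed
  exact hnd _ ContinuousLinearMap.toExposed.isExposed
    (hface.finrank_vectorSpan_toExposed_pos castVec_injective.injOn hcard)
    ⟨ζ, hζ, hfilter ▸ hval, fun j => hfilter ▸ hcrit j⟩

/-- **Strong tameness of a convenient nondegenerate Laurent polynomial on the torus.**
Let `f(z) = Σ_{α∈A} c_α z^α` be a convenient and nondegenerate Laurent polynomial on
`(ℂ*)ⁿ`.  Then for every `C > 0`,
`Σᵢ|zᵢ∂f/∂zᵢ|² − C·Σ_{i,j}|zᵢ∂/∂zᵢ(z_j∂f/∂z_j)| → ∞` as `Σᵢ|log|zᵢ|| → ∞`,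
where `zᵢ∂f/∂zᵢ = Σ_α c_α αᵢ z^α` and `zᵢ∂/∂zᵢ(z_j∂f/∂z_j) = Σ_α c_α αᵢα_j z^α`. -/
theorem strong_tameness_laurent
    (n : ℕ) (hn : 1 ≤ n) (A : Finset (Fin n → ℤ)) (hA : A.Nonempty)
    (c : (Fin n → ℤ) → ℂ) (hc : ∀ α ∈ A, c α ≠ 0)
    -- `f` is convenient: `0` lies in the interior of the Newton polyhedron
    (hconv : (0 : Fin n → ℝ) ∈
      interior (convexHull ℝ ((fun (α : Fin n → ℤ) (i : Fin n) => (α i : ℝ)) '' A)))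
    -- `f` is nondegenerate: for every face of positive dimension, the system
    -- `f^{Δ'} = f₁^{Δ'} = ⋯ = f_n^{Δ'} = 0` has no solution in the torus
    (hnd : ∀ F : Set (Fin n → ℝ),
      IsExposed ℝ (convexHull ℝ ((fun (α : Fin n → ℤ) (i : Fin n) => (α i : ℝ)) '' A)) F →
      0 < Module.finrank ℝ (vectorSpan ℝ F) →
      ¬ ∃ z : Fin n → ℂ, (∀ i, z i ≠ 0) ∧
        (∑ α ∈ A.filter (fun α => (fun i => (α i : ℝ)) ∈ F),
            c α * ∏ i, z i ^ (α i)) = 0 ∧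
        ∀ j, (∑ α ∈ A.filter (fun α => (fun i => (α i : ℝ)) ∈ F),
            c α * (α j : ℂ) * ∏ i, z i ^ (α i)) = 0) :
    ∀ C : ℝ, 0 < C → ∀ K : ℝ, ∃ R : ℝ, 0 < R ∧
      ∀ z : Fin n → ℂ, (∀ i, z i ≠ 0) →
        R ≤ ∑ i, |Real.log ‖z i‖| →
        K ≤ (∑ i, ‖∑ α ∈ A, c α * (α i : ℂ) * ∏ l, z l ^ (α l)‖ ^ 2)
            - C * ∑ i, ∑ j,
                ‖∑ α ∈ A, c α * (α i : ℂ) * (α j : ℂ) * ∏ l, z l ^ (α l)‖ :=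
  strong_tameness_laurent_general n A hA c hc hconv hnd
end

section
/- Let H₀ : D → 𝓗 be a symmetric linear operator that is bounded below (there is c ∈ ℝ with ⟨H₀ψ,ψ⟩ ≥ c‖ψ‖² for all ψ ∈ D), and let H₁ : D → 𝓗 be a symmetric linear operator such that for some constants 0 ≤ a < 1 and b ≥ 0 one has |⟨H₁ψ,ψ⟩| ≤ a·⟨H₀ψ,ψ⟩ + b·‖ψ‖² for all ψ ∈ D. If μₙ(H₀) → ∞ as n → ∞ (i.e. H₀ has only discrete spectrum), then μₙ(H₀ + H₁) → ∞ as n → ∞ (i.e. H₀ + H₁ has only discrete spectrum). -/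
/-- `U_H(φ₁,…,φ_m) = inf{⟨Hψ,ψ⟩ : ψ ∈ D, ‖ψ‖ = 1, ψ ⊥ φⱼ for all j}`. -/
noncomputable def minMaxU {E : Type*} [NormedAddCommGroup E] [InnerProductSpace ℂ E]
    {D : Submodule ℂ E} (H : D →ₗ[ℂ] E) {m : ℕ} (φ : Fin m → E) : ℝ :=
  sInf {r : ℝ | ∃ ψ : D, ‖(ψ : E)‖ = 1 ∧ (∀ j, (inner ℂ (ψ : E) (φ j) : ℂ) = 0) ∧
    r = (inner ℂ (H ψ) (ψ : E) : ℂ).re}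

/-- The min–max values `μₙ(H) = sup_{φ₁,…,φ_{n−1}} U_H(φ₁,…,φ_{n−1})`. -/
noncomputable def minMaxMu {E : Type*} [NormedAddCommGroup E] [InnerProductSpace ℂ E]
    {D : Submodule ℂ E} (H : D →ₗ[ℂ] E) (n : ℕ) : ℝ :=
  sSup {s : ℝ | ∃ φ : Fin (n - 1) → E, s = minMaxU H φ}

/-! For unit `ψ` the relative bound gives
`(1 - a)⟨H₀ψ,ψ⟩ - b ≤ ⟨(H₀ + H₁)ψ,ψ⟩ ≤ (1 + a)⟨H₀ψ,ψ⟩ + b`. Taking the infimum over the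
admissible `ψ` and then the supremum over `φ` yields `μₙ(H₀ + H₁) ≥ (1 - a) μₙ(H₀) - b → ∞`.
The upper comparison is needed only to know that the supremum defining `μₙ(H₀ + H₁)` is over a
bounded set, since `sSup` of an unbounded set of reals is the junk value `0`. -/

section InfSup

variable {ι : Sort*} {f g : ι → ℝ} {d : ℝ}

theorem Real.iInf_le_iInf_add (hd : 0 ≤ d) (hf : BddBelow (Set.range f))
    (h : ∀ i, f i ≤ g i + d) : ⨅ i, f i ≤ (⨅ i, g i) + d := by
  cases isEmpty_or_nonempty ι with
  | inl _ => simpa [Real.iInf_of_isEmpty] using hd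
  | inr _ =>
    have : (⨅ i, f i) - d ≤ ⨅ i, g i := le_ciInf fun i => by linarith [ciInf_le hf i, h i]
    linarith

theorem Real.iSup_le_iSup_add [Nonempty ι] (hg : BddAbove (Set.range g))
    (h : ∀ i, f i ≤ g i + d) : ⨆ i, f i ≤ (⨆ i, g i) + d :=
  ciSup_le fun i => (h i).trans (add_le_add_left (le_ciSup hg i) d)

end InfSup

section MinMax

variable {E : Type*} [NormedAddCommGroup E] [InnerProductSpace ℂ E] {D : Submodule ℂ E}

theorem minMaxU_eq_iInf (H : D →ₗ[ℂ] E) {m : ℕ} (φ : Fin m → E) :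
    minMaxU H φ = ⨅ ψ : {ψ : D // ‖(ψ : E)‖ = 1 ∧ ∀ j, (inner ℂ (ψ : E) (φ j) : ℂ) = 0},
      (inner ℂ (H ψ) (ψ : E) : ℂ).re := by
  rw [minMaxU, iInf]
  congr 1
  ext r
  simp [eq_comm, and_assoc]

theorem minMaxMu_eq_iSup (H : D →ₗ[ℂ] E) (n : ℕ) :
    minMaxMu H n = ⨆ φ : Fin (n - 1) → E, minMaxU H φ := by
  rw [minMaxMu, iSup]
  congr 1
  ext r
  simp [eq_comm]

variable {H0 H1 : D →ₗ[ℂ] E} {a b c : ℝ}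

theorem abs_re_inner_add_apply_sub_le
    (hrel : ∀ ψ : D, ‖(inner ℂ (H1 ψ) (ψ : E) : ℂ)‖ ≤
      a * (inner ℂ (H0 ψ) (ψ : E) : ℂ).re + b * ‖(ψ : E)‖ ^ 2) (ψ : D) :
    |(inner ℂ ((H0 + H1) ψ) (ψ : E) : ℂ).re - (inner ℂ (H0 ψ) (ψ : E) : ℂ).re| ≤
      a * (inner ℂ (H0 ψ) (ψ : E) : ℂ).re + b * ‖(ψ : E)‖ ^ 2 := by
  rw [LinearMap.add_apply, inner_add_left, Complex.add_re, add_sub_cancel_left]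
  exact (Complex.abs_re_le_norm _).trans (hrel ψ)

variable (hbdd : ∀ ψ : D, c * ‖(ψ : E)‖ ^ 2 ≤ (inner ℂ (H0 ψ) (ψ : E) : ℂ).re)
  (hrel : ∀ ψ : D, ‖(inner ℂ (H1 ψ) (ψ : E) : ℂ)‖ ≤
    a * (inner ℂ (H0 ψ) (ψ : E) : ℂ).re + b * ‖(ψ : E)‖ ^ 2)
include hbdd hrel

theorem sub_le_minMaxU_add (ha₁ : a ≤ 1) (hb : 0 ≤ b) {m : ℕ} (φ : Fin m → E) :
    (1 - a) * minMaxU H0 φ - b ≤ minMaxU (H0 + H1) φ := by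
  rw [minMaxU_eq_iInf, minMaxU_eq_iInf, Real.mul_iInf_of_nonneg (sub_nonneg.2 ha₁),
    sub_le_iff_le_add]
  refine Real.iInf_le_iInf_add hb ⟨(1 - a) * c, ?_⟩ fun ψ => ?_
  · rintro _ ⟨ψ, rfl⟩
    simpa [ψ.2.1] using mul_le_mul_of_nonneg_left (hbdd ψ) (sub_nonneg.2 ha₁)
  · have := abs_le.1 (abs_re_inner_add_apply_sub_le hrel ψ)
    rw [ψ.2.1] at this
    linarith

theorem minMaxU_add_le (ha₀ : 0 ≤ a) (ha₁ : a ≤ 1) (hb : 0 ≤ b) {m : ℕ} (φ : Fin m → E) :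
    minMaxU (H0 + H1) φ ≤ (1 + a) * minMaxU H0 φ + b := by
  rw [minMaxU_eq_iInf, minMaxU_eq_iInf, Real.mul_iInf_of_nonneg (by linarith)]
  refine Real.iInf_le_iInf_add hb ⟨(1 - a) * c - b, ?_⟩ fun ψ => ?_
  · rintro _ ⟨ψ, rfl⟩
    have hpert := abs_le.1 (abs_re_inner_add_apply_sub_le hrel ψ)
    have hbelow := mul_le_mul_of_nonneg_left (hbdd ψ) (sub_nonneg.2 ha₁)
    rw [ψ.2.1] at hpert hbelow
    linarith
  · have := abs_le.1 (abs_re_inner_add_apply_sub_le hrel ψ)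
    rw [ψ.2.1] at this
    linarith

theorem sub_le_minMaxMu_add (ha₀ : 0 ≤ a) (ha₁ : a ≤ 1) (hb : 0 ≤ b) {n : ℕ}
    (hn : minMaxMu H0 n ≠ 0) : (1 - a) * minMaxMu H0 n - b ≤ minMaxMu (H0 + H1) n := by
  simp only [minMaxMu_eq_iSup] at hn ⊢
  have hbdd₀ : BddAbove (Set.range fun φ : Fin (n - 1) → E => minMaxU H0 φ) :=
    not_not.1 fun h => hn (Real.iSup_of_not_bddAbove h)
  have hbdd₁ : BddAbove (Set.range fun φ : Fin (n - 1) → E => minMaxU (H0 + H1) φ) := by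
    refine ⟨(1 + a) * (⨆ φ : Fin (n - 1) → E, minMaxU H0 φ) + b, ?_⟩
    rintro _ ⟨φ, rfl⟩
    refine (minMaxU_add_le hbdd hrel ha₀ ha₁ hb φ).trans ?_
    gcongr
    exact le_ciSup hbdd₀ φ
  rw [Real.mul_iSup_of_nonneg (sub_nonneg.2 ha₁), sub_le_iff_le_add]
  exact Real.iSup_le_iSup_add hbdd₁ fun φ =>
    sub_le_iff_le_add.1 (sub_le_minMaxU_add hbdd hrel ha₁ hb φ)

end MinMax

theorem discrete_spectrum_of_relatively_bounded_perturbation_general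
    {E : Type*} [NormedAddCommGroup E] [InnerProductSpace ℂ E]
    (D : Submodule ℂ E)
    (H0 H1 : D →ₗ[ℂ] E)
    (hbdd : ∃ c : ℝ, ∀ ψ : D, c * ‖(ψ : E)‖ ^ 2 ≤ (inner ℂ (H0 ψ) (ψ : E) : ℂ).re)
    (a b : ℝ) (ha0 : 0 ≤ a) (ha1 : a < 1) (hb : 0 ≤ b)
    (hrel : ∀ ψ : D, ‖(inner ℂ (H1 ψ) (ψ : E) : ℂ)‖ ≤
      a * (inner ℂ (H0 ψ) (ψ : E) : ℂ).re + b * ‖(ψ : E)‖ ^ 2)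
    (hdisc : Filter.Tendsto (fun n => minMaxMu H0 n) Filter.atTop Filter.atTop) :
    Filter.Tendsto (fun n => minMaxMu (H0 + H1) n) Filter.atTop Filter.atTop := by
  obtain ⟨c, hc⟩ := hbdd
  have hlower : ∀ᶠ n in Filter.atTop, (1 - a) * minMaxMu H0 n - b ≤ minMaxMu (H0 + H1) n := by
    filter_upwards [hdisc.eventually_gt_atTop 0] with n hn
    exact sub_le_minMaxMu_add hc hrel ha0 ha1.le hb hn.ne'
  refine Filter.tendsto_atTop_mono' _ hlower ?_
  simpa only [sub_eq_add_neg] using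
    Filter.tendsto_atTop_add_const_right _ (-b) (hdisc.const_mul_atTop (sub_pos.2 ha1))

/-- **Compact perturbation preserves discreteness of spectrum.**
If `H₀` is symmetric and bounded below with `μₙ(H₀) → ∞` (purely discrete spectrum),
and `H₁` is symmetric with `|⟨H₁ψ,ψ⟩| ≤ a⟨H₀ψ,ψ⟩ + b‖ψ‖²` for some `0 ≤ a < 1`,
`b ≥ 0`, then `μₙ(H₀ + H₁) → ∞`, i.e. `H₀ + H₁ has only discrete spectrum`. -/
theorem discrete_spectrum_of_relatively_bounded_perturbation
    {E : Type*} [NormedAddCommGroup E] [InnerProductSpace ℂ E] [CompleteSpace E]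
    (D : Submodule ℂ E) (hD : Dense (D : Set E))
    (H0 H1 : D →ₗ[ℂ] E)
    (hsym0 : ∀ ψ φ : D, (inner ℂ (H0 ψ) (φ : E) : ℂ) = inner ℂ (ψ : E) (H0 φ))
    (hsym1 : ∀ ψ φ : D, (inner ℂ (H1 ψ) (φ : E) : ℂ) = inner ℂ (ψ : E) (H1 φ))
    (hbdd : ∃ c : ℝ, ∀ ψ : D, c * ‖(ψ : E)‖ ^ 2 ≤ (inner ℂ (H0 ψ) (ψ : E) : ℂ).re)
    (a b : ℝ) (ha0 : 0 ≤ a) (ha1 : a < 1) (hb : 0 ≤ b)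
    (hrel : ∀ ψ : D, ‖(inner ℂ (H1 ψ) (ψ : E) : ℂ)‖ ≤
      a * (inner ℂ (H0 ψ) (ψ : E) : ℂ).re + b * ‖(ψ : E)‖ ^ 2)
    (hdisc : Filter.Tendsto (fun n => minMaxMu H0 n) Filter.atTop Filter.atTop) :
    Filter.Tendsto (fun n => minMaxMu (H0 + H1) n) Filter.atTop Filter.atTop :=
  discrete_spectrum_of_relatively_bounded_perturbation_general D H0 H1 hbdd a b ha0 ha1 hb hrel
    hdisc
end

section
/- Let W ∈ ℂ[z₁,…,z_N] be a nondegenerate quasi-homogeneous polynomial of type (q₁,…,q_N) with all weights qᵢ < 1. Then there is a constant C > 0, depending only on W, such that for every point u = (u₁,…,u_N) ∈ ℂ^N and every index i, |uᵢ| ≤ C·(Σ_{j=1}^N |∂W/∂z_j(u)| + 1)^{δᵢ}. Moreover, if qᵢ ≤ 1/2 for all i then δᵢ ≤ 1 for all i, and if qᵢ < 1/2 for all i then δᵢ < 1 for all i. -/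
open MvPolynomial

lemma fjr_eval_bind₁ {N : ℕ} (x : Fin N → ℂ) (g : Fin N → MvPolynomial (Fin N) ℂ)
    (p : MvPolynomial (Fin N) ℂ) :
    eval x (bind₁ g p) = eval (fun i => eval x (g i)) p := by
  induction p using MvPolynomial.induction_on with
  | C a => simp
  | add p q hp hq => simp [map_add, hp, hq]
  | mul_X p i hp => simp [map_mul, hp]

lemma fjr_pderiv_scale {N : ℕ} (c : Fin N → ℂ) (j : Fin N) (p : MvPolynomial (Fin N) ℂ) :
    pderiv j (bind₁ (fun i => C (c i) * X i) p) =
      C (c j) * bind₁ (fun i => C (c i) * X i) (pderiv j p) := by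
  induction p using MvPolynomial.induction_on with
  | C a => simp
  | add p q hp hq => simp [map_add, hp, hq, mul_add]
  | mul_X p i hp =>
      simp only [map_mul, pderiv_mul, map_add, bind₁_X_right, pderiv_C, zero_mul, add_zero,
        zero_add, mul_zero, hp]
      by_cases h : i = j
      · subst h; simp only [pderiv_X_self, map_one, mul_one]; ring
      · simp only [pderiv_X_of_ne h, map_zero, mul_zero, zero_mul, add_zero, zero_add]; ring

/-- **The Fan–Jarvis–Ruan gradient estimate for quasi-homogeneous polynomials.**
Let `W` be a nondegenerate quasi-homogeneous polynomial of type `(q₁,…,q_N)` with all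
weights `qᵢ < 1`, and let `m = min_j (1 − q_j)`, `δᵢ = qᵢ / m`.  Then there is `C > 0`
such that `|uᵢ| ≤ C·(Σⱼ|∂W/∂z_j(u)| + 1)^{δᵢ}` for all `u ∈ ℂ^N` and all `i`.
Moreover `qᵢ ≤ 1/2` for all `i` implies `δᵢ ≤ 1` for all `i`, and `qᵢ < 1/2` for all
`i` implies `δᵢ < 1` for all `i`. -/
theorem fjr_gradient_estimate
    (N : ℕ) (hN : 1 ≤ N) (W : MvPolynomial (Fin N) ℂ)
    (q : Fin N → ℚ) (k : Fin N → ℕ) (d : ℕ)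
    (hk : ∀ i, 0 < k i) (hd : 0 < d)
    (hq : ∀ i, q i = (k i : ℚ) / (d : ℚ))
    (hq0 : ∀ i, 0 < q i) (hq1 : ∀ i, q i < 1)
    (hhom : ∀ (lam : ℂ) (z : Fin N → ℂ),
      eval (fun i => lam ^ (k i) * z i) W = lam ^ d * eval z W)
    (hnd : ∀ z : Fin N → ℂ, (∀ i, eval z (pderiv i W) = 0) → z = 0)
    -- `m = min_j (1 − q_j)`
    (m : ℚ) (hm : ∀ j, m ≤ 1 - q j) (hm' : ∃ j, 1 - q j = m) :
    (∃ C : ℝ, 0 < C ∧ ∀ u : Fin N → ℂ, ∀ i,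
        ‖u i‖ ≤ C * (∑ j, ‖eval u (pderiv j W)‖ + 1) ^ (((q i / m : ℚ) : ℝ)))
    ∧ ((∀ i, q i ≤ 1 / 2) → ∀ i, q i / m ≤ 1)
    ∧ ((∀ i, q i < 1 / 2) → ∀ i, q i / m < 1) := by
  haveI : Nonempty (Fin N) := Fin.pos_iff_nonempty.mp hN
  obtain ⟨j0, hj0⟩ := hm'
  have hm0 : 0 < m := by have := hq1 j0; linarith
  -- basic integer facts
  have hdQ : (0:ℚ) < (d:ℚ) := by exact_mod_cast hd
  have hkd : ∀ i, k i < d := by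
    intro i
    have h1 := hq1 i
    rw [hq i, div_lt_one hdQ] at h1
    exact_mod_cast h1
  have hkmax : ∀ j, k j ≤ k j0 := by
    intro j
    have h1 := hm j
    rw [← hj0] at h1
    have h2 : q j ≤ q j0 := by linarith
    rw [hq j, hq j0, div_le_div_iff_of_pos_right hdQ] at h2
    exact_mod_cast h2
  set e : ℕ := d - k j0 with he_def
  have he : 0 < e := Nat.sub_pos_of_lt (hkd j0)
  have heQ : (e : ℚ) = (d:ℚ) - (k j0 : ℚ) := by
    rw [he_def]; exact_mod_cast Nat.cast_sub (hkd j0).le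
  have heR : (0:ℝ) < (e:ℝ) := by exact_mod_cast he
  have hmE : m = (e:ℚ) / (d:ℚ) := by
    rw [← hj0, hq j0, heQ]; field_simp
  have hδ : ∀ i, ((q i / m : ℚ) : ℝ) = (k i : ℝ) / (e : ℝ) := by
    intro i
    have h1 : q i / m = (k i : ℚ) / (e : ℚ) := by
      rw [hq i, hmE]
      have he0 : ((e:ℚ)) ≠ 0 := by exact_mod_cast he.ne'
      field_simp
    rw [h1]; push_cast; ring
  have hδd : ∀ i, (k i : ℝ) / (e:ℝ) ≤ (d:ℝ) := by
    intro i
    have h1 : (1:ℝ) ≤ (e:ℝ) := by exact_mod_cast he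
    have h2 : (k i : ℝ) ≤ (d:ℝ) := by exact_mod_cast (hkd i).le
    rw [div_le_iff₀ heR]
    nlinarith
  -- homogeneity of the partial derivatives
  have hder : ∀ (lam : ℂ) (z : Fin N → ℂ) (j : Fin N),
      lam ^ (k j) * eval (fun i => lam ^ (k i) * z i) (pderiv j W)
        = lam ^ d * eval z (pderiv j W) := by
    intro lam z j
    have hS : bind₁ (fun i => C (lam ^ k i) * X i) W = C (lam ^ d) * W := by
      apply MvPolynomial.funext
      intro x
      simp [fjr_eval_bind₁, hhom]
    have h1 : C (lam ^ k j) * bind₁ (fun i => C (lam ^ k i) * X i) (pderiv j W)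
        = C (lam ^ d) * pderiv j W := by
      have h := congrArg (pderiv j) hS
      rwa [fjr_pderiv_scale, pderiv_mul, pderiv_C, zero_mul, zero_add] at h
    have h2 := congrArg (eval z) h1
    simpa [fjr_eval_bind₁] using h2
  -- compactness: minimum of the gradient norm on the unit sphere
  have hGcont : Continuous fun z : Fin N → ℂ => ∑ j, ‖eval z (pderiv j W)‖ :=
    continuous_finset_sum _ fun j _ => (MvPolynomial.continuous_eval _).norm
  obtain ⟨v0, hv0K, hv0min⟩ := (isCompact_sphere (0 : Fin N → ℂ) 1).exists_isMinOn
    (NormedSpace.sphere_nonempty.mpr zero_le_one) hGcont.continuousOn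
  set c : ℝ := ∑ j, ‖eval v0 (pderiv j W)‖ with hc_def
  have hcnonneg : 0 ≤ c := Finset.sum_nonneg fun j _ => norm_nonneg _
  have hc : 0 < c := by
    rcases hcnonneg.lt_or_eq with h | h
    · exact h
    · exfalso
      have hz : ∀ j, eval v0 (pderiv j W) = 0 := by
        intro j
        have h1 := (Finset.sum_eq_zero_iff_of_nonneg
          (fun j (_ : j ∈ Finset.univ) => norm_nonneg (eval v0 (pderiv j W)))).mp h.symm
        exact norm_eq_zero.mp (h1 j (Finset.mem_univ j))
      have h2 : ‖v0‖ = 1 := mem_sphere_zero_iff_norm.mp hv0K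
      rw [hnd v0 hz] at h2
      simp at h2
  set c0 : ℝ := min c 1 with hc0_def
  have hc0 : 0 < c0 := lt_min hc one_pos
  have hc01 : c0 ≤ 1 := min_le_right _ _
  have hc0inv : 1 ≤ c0⁻¹ := by
    nlinarith [mul_inv_cancel₀ (ne_of_gt hc0), inv_nonneg.mpr hc0.le]
  have hC1 : 1 ≤ c0⁻¹ ^ (d:ℝ) := Real.one_le_rpow hc0inv (by positivity)
  refine ⟨⟨c0⁻¹ ^ (d:ℝ), lt_of_lt_of_le one_pos hC1, ?_⟩, ?_, ?_⟩
  · -- the main estimate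
    intro u i
    rw [hδ i]
    set Gu : ℝ := ∑ j, ‖eval u (pderiv j W)‖ with hGu_def
    have hGu0 : 0 ≤ Gu := Finset.sum_nonneg fun j _ => norm_nonneg _
    have hpow1 : 1 ≤ (Gu + 1) ^ ((k i : ℝ)/(e:ℝ)) :=
      Real.one_le_rpow (by linarith) (by positivity)
    set t : ℝ := Finset.univ.sup' Finset.univ_nonempty
      (fun i' => ‖u i'‖ ^ ((k i' : ℝ)⁻¹)) with ht_def
    have htge : ∀ i', ‖u i'‖ ^ ((k i' : ℝ)⁻¹) ≤ t :=
      fun i' => Finset.le_sup' (f := fun i' => ‖u i'‖ ^ ((k i' : ℝ)⁻¹)) (Finset.mem_univ i')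
    have ht0 : 0 ≤ t := le_trans (Real.rpow_nonneg (norm_nonneg _) _) (htge i)
    have hkne : ∀ i', ((k i' : ℝ)) ≠ 0 := fun i' => by exact_mod_cast (hk i').ne'
    have hrpow_pow : ∀ i', (‖u i'‖ ^ ((k i' : ℝ)⁻¹)) ^ (k i') = ‖u i'‖ := by
      intro i'
      rw [← Real.rpow_natCast (‖u i'‖ ^ ((k i' : ℝ)⁻¹)) (k i'),
        ← Real.rpow_mul (norm_nonneg _), inv_mul_cancel₀ (hkne i'), Real.rpow_one]
    have hui : ∀ i', ‖u i'‖ ≤ t ^ (k i') := by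
      intro i'
      calc ‖u i'‖ = (‖u i'‖ ^ ((k i' : ℝ)⁻¹)) ^ (k i') := (hrpow_pow i').symm
        _ ≤ t ^ (k i') := pow_le_pow_left₀ (Real.rpow_nonneg (norm_nonneg _) _) (htge i') _
    by_cases ht1 : t ≤ 1
    · have h1 : ‖u i‖ ≤ 1 := (hui i).trans (pow_le_one₀ ht0 ht1)
      nlinarith
    · push_neg at ht1
      have ht0' : 0 < t := lt_trans one_pos ht1
      set v : Fin N → ℂ := fun i' => u i' / (t:ℂ) ^ (k i') with hv_def
      have htC : ((t:ℂ)) ≠ 0 := by exact_mod_cast ht0'.ne'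
      have hvnorm : ∀ i', ‖v i'‖ = ‖u i'‖ / t ^ (k i') := by
        intro i'
        rw [hv_def]
        simp [norm_div, norm_pow, Complex.norm_real, Real.norm_eq_abs, abs_of_pos ht0']
      have hvK : v ∈ Metric.sphere (0 : Fin N → ℂ) 1 := by
        rw [mem_sphere_zero_iff_norm]
        apply le_antisymm
        · apply (pi_norm_le_iff_of_nonneg zero_le_one).mpr
          intro i'
          rw [hvnorm i', div_le_one (pow_pos ht0' _)]
          exact hui i'
        · obtain ⟨i0, -, hi0⟩ := Finset.exists_mem_eq_sup' Finset.univ_nonempty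
            (fun i' => ‖u i'‖ ^ ((k i' : ℝ)⁻¹))
          have hti0 : t = ‖u i0‖ ^ ((k i0 : ℝ)⁻¹) := ht_def.trans hi0
          have h1 : ‖u i0‖ = t ^ (k i0) := by rw [hti0, hrpow_pow i0]
          have h2 : ‖v i0‖ = 1 := by
            rw [hvnorm i0, h1, div_self (pow_pos ht0' _).ne']
          calc (1:ℝ) = ‖v i0‖ := h2.symm
            _ ≤ ‖v‖ := norm_le_pi_norm v i0
      have hGv : c ≤ ∑ j, ‖eval v (pderiv j W)‖ := hv0min hvK
      have huv : ∀ j, eval u (pderiv j W) = (t:ℂ) ^ (d - k j) * eval v (pderiv j W) := by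
        intro j
        have h1 := hder (t:ℂ) v j
        have hu' : (fun i' => ((t:ℂ)) ^ (k i') * v i') = u := by
          funext i'
          rw [hv_def]
          field_simp
        rw [hu'] at h1
        have hd' : ((t:ℂ)) ^ d = (t:ℂ) ^ (k j) * (t:ℂ) ^ (d - k j) := by
          rw [← pow_add, Nat.add_sub_cancel' (hkd j).le]
        rw [hd', mul_assoc] at h1
        exact mul_left_cancel₀ (pow_ne_zero _ htC) h1
      have hGuv : Gu = ∑ j, t ^ (d - k j) * ‖eval v (pderiv j W)‖ := by
        rw [hGu_def]
        apply Finset.sum_congr rfl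
        intro j _
        rw [huv j, norm_mul, norm_pow, Complex.norm_real, Real.norm_eq_abs, abs_of_pos ht0']
      have hte : t ^ e * c0 ≤ Gu := by
        have hGv' : c0 ≤ ∑ j, ‖eval v (pderiv j W)‖ := le_trans (min_le_left _ _) hGv
        calc t ^ e * c0 ≤ t ^ e * ∑ j, ‖eval v (pderiv j W)‖ := by
              nlinarith [pow_pos ht0' e]
          _ = ∑ j, t ^ e * ‖eval v (pderiv j W)‖ := Finset.mul_sum _ _ _
          _ ≤ ∑ j, t ^ (d - k j) * ‖eval v (pderiv j W)‖ := by
              apply Finset.sum_le_sum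
              intro j _
              apply mul_le_mul_of_nonneg_right _ (norm_nonneg _)
              exact pow_le_pow_right₀ ht1.le (Nat.sub_le_sub_left (hkmax j) d)
          _ = Gu := hGuv.symm
      have hR : t ^ e ≤ (Gu + 1) / c0 := by
        rw [le_div_iff₀ hc0]
        nlinarith
      have hti : t ^ (k i) ≤ ((Gu + 1) / c0) ^ ((k i : ℝ)/(e:ℝ)) := by
        have h1 : t ^ (k i) = (t ^ e) ^ ((k i : ℝ)/(e:ℝ)) := by
          rw [← Real.rpow_natCast t e, ← Real.rpow_mul ht0]
          rw [mul_div_assoc']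
          rw [mul_div_cancel_left₀ _ heR.ne']
          exact (Real.rpow_natCast t (k i)).symm
        rw [h1]
        exact Real.rpow_le_rpow (by positivity) hR (by positivity)
      have hsplit : ((Gu + 1) / c0) ^ ((k i : ℝ)/(e:ℝ))
          = (Gu + 1) ^ ((k i : ℝ)/(e:ℝ)) * (c0⁻¹) ^ ((k i : ℝ)/(e:ℝ)) := by
        rw [div_eq_mul_inv, Real.mul_rpow (by linarith) (by positivity)]
      have hc0pow : (c0⁻¹) ^ ((k i : ℝ)/(e:ℝ)) ≤ c0⁻¹ ^ (d:ℝ) :=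
        Real.rpow_le_rpow_of_exponent_le hc0inv (hδd i)
      calc ‖u i‖ ≤ t ^ (k i) := hui i
        _ ≤ ((Gu + 1) / c0) ^ ((k i : ℝ)/(e:ℝ)) := hti
        _ = (Gu + 1) ^ ((k i : ℝ)/(e:ℝ)) * (c0⁻¹) ^ ((k i : ℝ)/(e:ℝ)) := hsplit
        _ ≤ (Gu + 1) ^ ((k i : ℝ)/(e:ℝ)) * c0⁻¹ ^ (d:ℝ) :=
            mul_le_mul_of_nonneg_left hc0pow (Real.rpow_nonneg (by linarith) _)
        _ = c0⁻¹ ^ (d:ℝ) * (Gu + 1) ^ ((k i : ℝ)/(e:ℝ)) := mul_comm _ _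
  · intro h i
    rw [div_le_one hm0]
    have h1 := h i
    have h2 := h j0
    linarith
  · intro h i
    rw [div_lt_one hm0]
    have h1 := h i
    have h2 := h j0
    linarith
end

section
/- Let W ∈ ℂ[z₁,…,z_N] be a nondegenerate quasi-homogeneous polynomial of type (q₁,…,q_N) with all weights qᵢ < 1. Then the gradient of W is proper: Σᵢ|∂W/∂zᵢ(z)| → ∞ as ‖z‖ → ∞ in ℂ^N, i.e. for every K ∈ ℝ there is R > 0 such that ‖z‖ ≥ R implies Σᵢ|∂W/∂zᵢ(z)| ≥ K. -/
open MvPolynomial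

/-!
Write `λ · z = (λ ^ kᵢ * zᵢ)ᵢ`. Differentiating `W (λ · z) = λ ^ d * W z` in `zᵢ` gives
`λ ^ kᵢ * ∂ᵢW (λ · z) = λ ^ d * ∂ᵢW z`, so for real `λ ≥ 1` and `kᵢ < d` we get
`‖∂ᵢW (λ · w)‖ ≥ λ * ‖∂ᵢW w‖`. By nondegeneracy and compactness, `∑ᵢ ‖∂ᵢW‖` is bounded below by
some `m > 0` on the unit sphere. By the intermediate value theorem every `z` with `‖z‖ ≥ 1` is
`λ · w` with `‖w‖ = 1` and `λ ≥ 1`; then `‖z‖ ≤ λ ^ d`, so `∑ᵢ ‖∂ᵢW z‖ ≥ λ * m` grows at least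
like `‖z‖ ^ (1 / d)`.
-/

def weightedScale {R ι : Type*} [Monoid R] (k : ι → ℕ) (c : R) (z : ι → R) : ι → R :=
  fun i => c ^ k i * z i

section weightedScale

variable {R ι : Type*}

@[simp]
theorem weightedScale_apply [Monoid R] (k : ι → ℕ) (c : R) (z : ι → R) (i : ι) :
    weightedScale k c z i = c ^ k i * z i := rfl

theorem weightedScale_one [Monoid R] (k : ι → ℕ) (z : ι → R) : weightedScale k 1 z = z := by
  ext; simp

theorem weightedScale_weightedScale [CommMonoid R] (k : ι → ℕ) (a b : R) (z : ι → R) :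
    weightedScale k a (weightedScale k b z) = weightedScale k (a * b) z := by
  ext; simp [mul_pow, mul_assoc]

theorem weightedScale_zero [MonoidWithZero R] {k : ι → ℕ} (hk : ∀ i, k i ≠ 0) (z : ι → R) :
    weightedScale k 0 z = 0 := by
  ext i; simp [hk i]

end weightedScale

theorem Nat.pos_and_lt_of_cast_div_mem_Ioo {k d : ℕ} (h : (k : ℚ) / d ∈ Set.Ioo 0 1) :
    0 < k ∧ k < d := by
  obtain ⟨h0, h1⟩ := h
  obtain ⟨hk, hd⟩ : (0 : ℚ) < k ∧ (0 : ℚ) < d := by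
    rcases div_pos_iff.1 h0 with h | ⟨h, -⟩
    exacts [h, absurd h (not_lt.2 k.cast_nonneg)]
  exact ⟨by exact_mod_cast hk, by exact_mod_cast (div_lt_one hd).1 h1⟩

namespace MvPolynomial

variable {R σ : Type*}

def IsQuasiHomogeneous [CommSemiring R] (k : σ → ℕ) (d : ℕ) (W : MvPolynomial σ R) : Prop :=
  ∀ (c : R) (z : σ → R), eval (weightedScale k c z) W = c ^ d * eval z W

def IsNondegenerate [CommSemiring R] (W : MvPolynomial σ R) : Prop :=
  ∀ z : σ → R, (∀ i, eval z (pderiv i W) = 0) → z = 0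

theorem eval_aeval_C_pow_mul_X [CommSemiring R] (k : σ → ℕ) (c : R) (z : σ → R)
    (p : MvPolynomial σ R) :
    eval z (aeval (fun j => C c ^ k j * X j) p) = eval (weightedScale k c z) p := by
  refine (eval₂Hom_bind₁ _ _ _ _).trans ?_
  simp only [coe_eval₂Hom, eval₂_mul, eval₂_pow, eval₂_C, eval₂_X, RingHom.id_apply]
  rfl

theorem pderiv_aeval_C_pow_mul_X [CommSemiring R] (k : σ → ℕ) (c : R) (i : σ)
    (p : MvPolynomial σ R) :
    pderiv i (aeval (fun j => C c ^ k j * X j) p)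
      = C c ^ k i * aeval (fun j => C c ^ k j * X j) (pderiv i p) := by
  classical
  induction p using MvPolynomial.induction_on with
  | C a => simp
  | add p q hp hq => simp only [map_add, hp, hq, mul_add]
  | mul_X p j hp =>
    rw [map_mul, aeval_X, pderiv_mul, hp]
    simp only [← C_pow, pderiv_mul, map_add, map_mul, aeval_X, pderiv_X, Pi.single_apply]
    split_ifs with h
    · subst h; simp; ring
    · simp [mul_assoc]

theorem IsQuasiHomogeneous.pow_mul_eval_weightedScale_pderiv [CommRing R] [IsDomain R]
    [Infinite R] {k : σ → ℕ} {d : ℕ} {W : MvPolynomial σ R} (hW : IsQuasiHomogeneous k d W)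
    (c : R) (z : σ → R) (i : σ) :
    c ^ k i * eval (weightedScale k c z) (pderiv i W) = c ^ d * eval z (pderiv i W) := by
  have hsubst : aeval (fun j => C c ^ k j * X j) W = C (c ^ d) * W :=
    MvPolynomial.funext fun x => by rw [eval_aeval_C_pow_mul_X, hW, eval_mul, eval_C]
  have := congrArg (eval z ∘ pderiv i) hsubst
  simpa only [Function.comp_apply, pderiv_aeval_C_pow_mul_X, pderiv_C_mul, eval_mul, eval_pow,
    eval_C, eval_aeval_C_pow_mul_X] using this

variable {𝕜 ι : Type*} [RCLike 𝕜]

theorem IsQuasiHomogeneous.mul_norm_eval_pderiv_le {k : ι → ℕ} {d : ℕ} {W : MvPolynomial ι 𝕜}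
    (hW : IsQuasiHomogeneous k d W) {i : ι} (hki : k i < d) {c : ℝ} (hc : 1 ≤ c) (w : ι → 𝕜) :
    c * ‖eval w (pderiv i W)‖ ≤ ‖eval (weightedScale k (c : 𝕜) w) (pderiv i W)‖ := by
  have hid := congrArg norm (hW.pow_mul_eval_weightedScale_pderiv (c : 𝕜) w i)
  simp only [norm_mul, norm_pow, RCLike.norm_ofReal, abs_of_pos (by linarith : 0 < c)] at hid
  refine le_of_mul_le_mul_left ?_ (by positivity : 0 < c ^ k i)
  calc c ^ k i * (c * ‖eval w (pderiv i W)‖) = c ^ (k i + 1) * ‖eval w (pderiv i W)‖ := by ring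
    _ ≤ c ^ d * ‖eval w (pderiv i W)‖ := by gcongr; exact hki
    _ = _ := hid.symm

theorem IsQuasiHomogeneous.mul_sum_norm_eval_pderiv_le [Fintype ι] {k : ι → ℕ} {d : ℕ}
    {W : MvPolynomial ι 𝕜} (hW : IsQuasiHomogeneous k d W) (hkd : ∀ i, k i < d) {c : ℝ}
    (hc : 1 ≤ c) (w : ι → 𝕜) :
    c * ∑ i, ‖eval w (pderiv i W)‖ ≤ ∑ i, ‖eval (weightedScale k (c : 𝕜) w) (pderiv i W)‖ := by
  rw [Finset.mul_sum]
  exact Finset.sum_le_sum fun i _ => hW.mul_norm_eval_pderiv_le (hkd i) hc w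

theorem IsNondegenerate.exists_pos_le_sum_norm_eval_pderiv [Fintype ι] {W : MvPolynomial ι 𝕜}
    (hW : IsNondegenerate W) :
    ∃ m > 0, ∀ w : EuclideanSpace 𝕜 ι, ‖w‖ = 1 → m ≤ ∑ i, ‖eval (w : ι → 𝕜) (pderiv i W)‖ := by
  have hcont : Continuous fun w : EuclideanSpace 𝕜 ι => ∑ i, ‖eval (w : ι → 𝕜) (pderiv i W)‖ :=
    continuous_finsetSum _ fun i _ =>
      ((continuous_eval _).comp (PiLp.continuous_ofLp 2 _)).norm
  have hpos (w : EuclideanSpace 𝕜 ι) (hw : w ∈ Metric.sphere 0 1) :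
      0 < ∑ i, ‖eval (w : ι → 𝕜) (pderiv i W)‖ := by
    refine (Finset.sum_nonneg fun i _ => norm_nonneg _).lt_of_ne fun h => ?_
    have hzero := (Finset.sum_eq_zero_iff_of_nonneg fun i _ => norm_nonneg _).1 h.symm
    have : w = 0 := WithLp.ofLp_injective 2 <|
      hW _ fun i => norm_eq_zero.1 (hzero i (Finset.mem_univ i))
    simp [this] at hw
  obtain ⟨m, hm, hmin⟩ := (isCompact_sphere (0 : EuclideanSpace 𝕜 ι) 1).exists_forall_le'
    hcont.continuousOn hpos
  exact ⟨m, hm, fun w hw => hmin w (by simpa using hw)⟩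

end MvPolynomial

namespace EuclideanSpace

variable {𝕜 ι : Type*} [RCLike 𝕜] [Fintype ι]

theorem norm_toLp_weightedScale_le {k : ι → ℕ} {d : ℕ} (hkd : ∀ i, k i ≤ d)
    {c : ℝ} (hc : 1 ≤ c) (w : EuclideanSpace 𝕜 ι) :
    ‖WithLp.toLp 2 (weightedScale k (c : 𝕜) w)‖ ≤ c ^ d * ‖w‖ := by
  have hcoord (i : ι) : ‖(c : 𝕜) ^ k i * w i‖ ≤ c ^ d * ‖w i‖ := by
    rw [norm_mul, norm_pow, RCLike.norm_ofReal, abs_of_nonneg (by positivity)]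
    gcongr
    exact hkd i
  rw [EuclideanSpace.norm_eq, EuclideanSpace.norm_eq, ← Real.sqrt_sq (by positivity : 0 ≤ c ^ d),
    ← Real.sqrt_mul (by positivity), Finset.mul_sum]
  gcongr with i
  rw [WithLp.ofLp_toLp, weightedScale_apply, ← mul_pow]
  gcongr
  exact hcoord i

theorem exists_eq_toLp_weightedScale {k : ι → ℕ} (hk : ∀ i, k i ≠ 0)
    (z : EuclideanSpace 𝕜 ι) (hz : 1 ≤ ‖z‖) :
    ∃ c : ℝ, 1 ≤ c ∧ ∃ w : EuclideanSpace 𝕜 ι, ‖w‖ = 1 ∧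
      z = WithLp.toLp 2 (weightedScale k (c : 𝕜) w) := by
  set f : ℝ → ℝ := fun t => ‖WithLp.toLp 2 (weightedScale k (t : 𝕜) z)‖
  have hf : Continuous f :=
    continuous_norm.comp <| (PiLp.continuous_toLp 2 _).comp <| continuous_pi fun i => by
      simp only [weightedScale_apply]; fun_prop
  have hf0 : f 0 = 0 := by simp [f, weightedScale_zero hk]
  have hf1 : f 1 = ‖z‖ := by simp [f, weightedScale_one]
  obtain ⟨t, ⟨ht0, ht1⟩, hft⟩ :=
    intermediate_value_Icc zero_le_one hf.continuousOn ⟨hf0 ▸ zero_le_one, hf1 ▸ hz⟩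
  have htpos : 0 < t := ht0.lt_of_ne (by rintro rfl; simp [hf0] at hft)
  refine ⟨t⁻¹, (one_le_inv₀ htpos).2 ht1, _, hft, ?_⟩
  rw [WithLp.ofLp_toLp, weightedScale_weightedScale, ← RCLike.ofReal_mul,
    inv_mul_cancel₀ htpos.ne', RCLike.ofReal_one, weightedScale_one, WithLp.toLp_ofLp]

end EuclideanSpace

theorem gradient_proper_quasihomogeneous_general
    (N : ℕ) (W : MvPolynomial (Fin N) ℂ)
    (q : Fin N → ℚ) (k : Fin N → ℕ) (d : ℕ)
    (hq : ∀ i, q i = (k i : ℚ) / (d : ℚ))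
    (hq0 : ∀ i, 0 < q i) (hq1 : ∀ i, q i < 1)
    (hhom : ∀ (lam : ℂ) (z : Fin N → ℂ),
      eval (fun i => lam ^ (k i) * z i) W = lam ^ d * eval z W)
    (hnd : ∀ z : Fin N → ℂ, (∀ i, eval z (pderiv i W) = 0) → z = 0) :
    ∀ K : ℝ, ∃ R : ℝ, 0 < R ∧
      ∀ z : EuclideanSpace ℂ (Fin N), R ≤ ‖z‖ →
        K ≤ ∑ i, ‖eval (z : Fin N → ℂ) (pderiv i W)‖ := by
  have hk (i : Fin N) : 0 < k i ∧ k i < d :=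
    Nat.pos_and_lt_of_cast_div_mem_Ioo ⟨hq i ▸ hq0 i, hq i ▸ hq1 i⟩
  have hW : IsQuasiHomogeneous k d W := hhom
  obtain ⟨m, hm, hmin⟩ := IsNondegenerate.exists_pos_le_sum_norm_eval_pderiv hnd
  intro K
  set C := max 1 (K / m)
  have hC : 1 ≤ C := le_max_left _ _
  refine ⟨C ^ d + 1, by positivity, fun z hz => ?_⟩
  obtain ⟨c, hc, w, hw, rfl⟩ := EuclideanSpace.exists_eq_toLp_weightedScale
    (fun i => (hk i).1.ne') z (by linarith [one_le_pow₀ (n := d) hC])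
  have hCc : C < c := by
    refine lt_of_pow_lt_pow_left₀ d (by linarith) ?_
    have := EuclideanSpace.norm_toLp_weightedScale_le (fun i => (hk i).2.le) hc w
    rw [hw, mul_one] at this
    linarith
  calc K ≤ C * m := (div_le_iff₀ hm).1 (le_max_right _ _)
    _ ≤ c * ∑ i, ‖eval (w : Fin N → ℂ) (pderiv i W)‖ := by gcongr; exact hmin w hw
    _ ≤ _ := hW.mul_sum_norm_eval_pderiv_le (fun i => (hk i).2) hc w

/-- **Properness of the gradient of a nondegenerate quasi-homogeneous polynomial.**
If `W` is nondegenerate quasi-homogeneous of type `(q₁,…,q_N)` with all weights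
`qᵢ < 1`, then `Σᵢ|∂W/∂zᵢ(z)| → ∞` as `‖z‖ → ∞` in `ℂ^N`. -/
theorem gradient_proper_quasihomogeneous
    (N : ℕ) (hN : 1 ≤ N) (W : MvPolynomial (Fin N) ℂ)
    (q : Fin N → ℚ) (k : Fin N → ℕ) (d : ℕ)
    (hk : ∀ i, 0 < k i) (hd : 0 < d)
    (hq : ∀ i, q i = (k i : ℚ) / (d : ℚ))
    (hq0 : ∀ i, 0 < q i) (hq1 : ∀ i, q i < 1)
    (hhom : ∀ (lam : ℂ) (z : Fin N → ℂ),
      eval (fun i => lam ^ (k i) * z i) W = lam ^ d * eval z W)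
    (hnd : ∀ z : Fin N → ℂ, (∀ i, eval z (pderiv i W) = 0) → z = 0) :
    ∀ K : ℝ, ∃ R : ℝ, 0 < R ∧
      ∀ z : EuclideanSpace ℂ (Fin N), R ≤ ‖z‖ →
        K ≤ ∑ i, ‖eval (z : Fin N → ℂ) (pderiv i W)‖ :=
  gradient_proper_quasihomogeneous_general N W q k d hq hq0 hq1 hhom hnd
end

section
/- Let f(z) = Σ_{α∈A} c_α z^α be a convenient and nondegenerate Laurent polynomial on (ℂ*)ⁿ. Let β ∈ ℂⁿ with Re β ≠ 0, and let M = {α ∈ A : ⟨α, Re β⟩ = max_{α'∈A} ⟨α', Re β⟩} be the set of exponents on which the linear functional ⟨·, Re β⟩ attains its maximum over A. Then for every θ ∈ ℝ, Σ_{i=1}^n |Σ_{α∈M} c_α·αᵢ·e^{i·Im(Σ_j α_j β_j)·θ}| > 0; equivalently, there exists an index i such that Σ_{α∈M} c_α·αᵢ·e^{i·Im(⟨α,β⟩)·θ} ≠ 0. -/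
/-!
Let `ℓ = ⟨·, Re β⟩` and let `F` be the exposed face of the Newton polytope on which `ℓ` is
maximal, so that `M = A ∩ F`. Since `0` is an interior point, `ℓ ≡ m > 0` on `F`. At the torus point
`z_j = e^{iθ Im β_j}` one has `z^α = e^{i Im⟨α,β⟩ θ}`, so the inner sums are the logarithmic
derivatives `f_i^F(z)`. If they all vanished, the Euler relation `Σ_j Re β_j f_j^F = m f^F`
would force `f^F(z) = 0` too: this contradicts nondegeneracy if `dim F > 0`, and if `F` is a
vertex then `f^F` is a single monomial, which does not vanish on the torus.
-/

open Finset Filter Topology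
open scoped Classical

section ConvexGeometry

variable {E : Type*} [AddCommGroup E] [Module ℝ E] [TopologicalSpace E]

theorem ContinuousLinearMap.mem_toExposed_convexHull_iff (l : StrongDual ℝ E) {S : Set E}
    {s : E} (hs : s ∈ S) : s ∈ l.toExposed (convexHull ℝ S) ↔ ∀ t ∈ S, l t ≤ l s :=
  ⟨fun h t ht => h.2 t (subset_convexHull ℝ S ht), fun h => ⟨subset_convexHull ℝ S hs,
    fun _ hy => convexHull_min h (convex_halfSpace_le l.toLinearMap.isLinear (l s)) hy⟩⟩

theorem ContinuousLinearMap.filter_mem_toExposed_convexHull {κ : Type*} (l : StrongDual ℝ E)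
    (e : κ → E) (A : Finset κ) :
    A.filter (fun a => e a ∈ l.toExposed (convexHull ℝ (e '' A))) =
      A.filter (fun a => ∀ a' ∈ A, l (e a') ≤ l (e a)) :=
  filter_congr fun _ ha =>
    (l.mem_toExposed_convexHull_iff (Set.mem_image_of_mem e ha)).trans Set.forall_mem_image

theorem exists_pos_of_zero_mem_interior_convexHull [ContinuousSMul ℝ E]
    {S : Set E} (h0 : 0 ∈ interior (convexHull ℝ S)) {l : StrongDual ℝ E} (hl : l ≠ 0) :
    ∃ s ∈ S, 0 < l s := by
  obtain ⟨v, hv⟩ : ∃ v, 0 < l v := by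
    obtain ⟨v, hv⟩ : ∃ v, l v ≠ 0 := by
      by_contra! h
      exact hl (ContinuousLinearMap.ext h)
    rcases hv.lt_or_gt with hv | hv
    · exact ⟨-v, by simpa using hv⟩
    · exact ⟨v, hv⟩
  have hray : ∀ᶠ t in 𝓝[>] (0 : ℝ), t • v ∈ convexHull ℝ S := by
    have hcont : Tendsto (fun t : ℝ => t • v) (𝓝 0) (𝓝 0) := tendsto_id.zero_smul_const v
    exact nhdsWithin_le_nhds (hcont.eventually (mem_interior_iff_mem_nhds.1 h0))
  obtain ⟨t, ht, htpos⟩ := (hray.and self_mem_nhdsWithin).exists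
  obtain ⟨s, hs, hle⟩ := (l.toLinearMap.convexOn (convex_convexHull ℝ S))
    |>.exists_ge_of_mem_convexHull (subset_convexHull ℝ S) ht
  exact ⟨s, hs, lt_of_lt_of_le (by simpa using mul_pos htpos hv) hle⟩

end ConvexGeometry

section LaurentSums

variable {ι : Type*} [Fintype ι]

theorem prod_exp_zpow_eq_exp_im (β : ι → ℂ) (θ : ℝ) (α : ι → ℤ) :
    ∏ i, Complex.exp (Complex.I * ((β i).im : ℂ) * θ) ^ α i =
      Complex.exp (Complex.I * (((∑ j, (α j : ℂ) * β j).im : ℝ) : ℂ) * θ) := by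
  simp_rw [← Complex.exp_int_mul, ← Complex.exp_sum, Complex.im_sum]
  push_cast
  simp only [Complex.mul_im, Complex.intCast_re, Complex.intCast_im, zero_mul, add_zero]
  congr 1
  rw [mul_sum, sum_mul]
  exact sum_congr rfl fun j _ => by push_cast; ring

theorem sum_eq_zero_of_forall_sum_mul_eq_zero {M : Finset (ι → ℤ)} {r : ι → ℝ} {m : ℝ}
    (hm : m ≠ 0) (hM : ∀ α ∈ M, ∑ j, (α j : ℝ) * r j = m) {g : (ι → ℤ) → ℂ}
    (hg : ∀ j, ∑ α ∈ M, g α * α j = 0) : ∑ α ∈ M, g α = 0 := by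
  have euler : (m : ℂ) * ∑ α ∈ M, g α = ∑ j, (r j : ℂ) * ∑ α ∈ M, g α * α j := by
    simp_rw [mul_sum]
    rw [sum_comm]
    refine sum_congr rfl fun α hα => ?_
    rw [← hM α hα]
    push_cast
    rw [sum_mul]
    exact sum_congr rfl fun j _ => by ring
  simpa [hg, hm] using euler

theorem sum_filter_ne_zero_of_finrank_vectorSpan_eq_zero {A : Finset (ι → ℤ)}
    {F : Set (ι → ℝ)} (hF : Module.finrank ℝ (vectorSpan ℝ F) = 0)
    (hAF : ∃ α ∈ A, (fun i => (α i : ℝ)) ∈ F) {g : (ι → ℤ) → ℂ} (hg : ∀ α ∈ A, g α ≠ 0) :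
    ∑ α ∈ A.filter (fun α => (fun i => (α i : ℝ)) ∈ F), g α ≠ 0 := by
  obtain ⟨α₀, hα₀A, hα₀F⟩ := hAF
  have hsub : F.Subsingleton :=
    (vectorSpan_eq_bot_iff_subsingleton ℝ).1 (Submodule.finrank_eq_zero.1 hF)
  have hvertex : A.filter (fun α => (fun i => (α i : ℝ)) ∈ F) = {α₀} := by
    refine eq_singleton_iff_unique_mem.2 ⟨mem_filter.2 ⟨hα₀A, hα₀F⟩, fun α hα => ?_⟩
    funext i
    exact_mod_cast congrFun (hsub (mem_filter.1 hα).2 hα₀F) i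
  rw [hvertex, sum_singleton]
  exact hg α₀ hα₀A

theorem exists_sum_filter_mul_coord_ne_zero {A : Finset (ι → ℤ)} {F : Set (ι → ℝ)}
    {c P : (ι → ℤ) → ℂ} (hc : ∀ α ∈ A, c α ≠ 0) (hP : ∀ α, P α ≠ 0) {r : ι → ℝ} {m : ℝ}
    (hm : m ≠ 0)
    (hlevel : ∀ α ∈ A.filter (fun α => (fun i => (α i : ℝ)) ∈ F), ∑ j, (α j : ℝ) * r j = m)
    (hAF : ∃ α ∈ A, (fun i => (α i : ℝ)) ∈ F)
    (hnd : 0 < Module.finrank ℝ (vectorSpan ℝ F) →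
      ¬ ((∑ α ∈ A.filter (fun α => (fun i => (α i : ℝ)) ∈ F), c α * P α) = 0 ∧
        ∀ j, ∑ α ∈ A.filter (fun α => (fun i => (α i : ℝ)) ∈ F), c α * (α j : ℂ) * P α = 0)) :
    ∃ j, ∑ α ∈ A.filter (fun α => (fun i => (α i : ℝ)) ∈ F), c α * (α j : ℂ) * P α ≠ 0 := by
  by_contra! hpartial
  have hf : ∑ α ∈ A.filter (fun α => (fun i => (α i : ℝ)) ∈ F), c α * P α = 0 :=
    sum_eq_zero_of_forall_sum_mul_eq_zero hm hlevel fun j => by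
      simpa only [mul_right_comm] using hpartial j
  rcases Nat.eq_zero_or_pos (Module.finrank ℝ (vectorSpan ℝ F)) with hdim | hdim
  · exact sum_filter_ne_zero_of_finrank_vectorSpan_eq_zero hdim hAF
      (fun α hα => mul_ne_zero (hc α hα) (hP α)) hf
  · exact hnd hdim ⟨hf, hpartial⟩

end LaurentSums

theorem laurent_nonvanishing_claim_general
    (n : ℕ) (A : Finset (Fin n → ℤ)) (hA : A.Nonempty)
    (c : (Fin n → ℤ) → ℂ) (hc : ∀ α ∈ A, c α ≠ 0)
    -- `f` is convenient
    (hconv : (0 : Fin n → ℝ) ∈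
      interior (convexHull ℝ ((fun (α : Fin n → ℤ) (i : Fin n) => (α i : ℝ)) '' A)))
    -- `f` is nondegenerate
    (hnd : ∀ F : Set (Fin n → ℝ),
      IsExposed ℝ (convexHull ℝ ((fun (α : Fin n → ℤ) (i : Fin n) => (α i : ℝ)) '' A)) F →
      0 < Module.finrank ℝ (vectorSpan ℝ F) →
      ¬ ∃ z : Fin n → ℂ, (∀ i, z i ≠ 0) ∧
        (∑ α ∈ A.filter (fun α => (fun i => (α i : ℝ)) ∈ F),
            c α * ∏ i, z i ^ (α i)) = 0 ∧
        ∀ j, (∑ α ∈ A.filter (fun α => (fun i => (α i : ℝ)) ∈ F),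
            c α * (α j : ℂ) * ∏ i, z i ^ (α i)) = 0)
    (β : Fin n → ℂ) (hβ : (fun j => (β j).re) ≠ (0 : Fin n → ℝ)) :
    ∀ θ : ℝ,
      0 < ∑ i, ‖
        (∑ α ∈ A.filter (fun α => ∀ α' ∈ A,
            (∑ j, (α' j : ℝ) * (β j).re) ≤ ∑ j, (α j : ℝ) * (β j).re),
          c α * (α i : ℂ) *
            Complex.exp (Complex.I * (((∑ j, (α j : ℂ) * β j).im : ℝ) : ℂ) * (θ : ℂ)))‖ := by
  intro θ
  set l : StrongDual ℝ (Fin n → ℝ) :=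
    LinearMap.toContinuousLinearMap ((dotProductBilin ℝ ℝ).flip fun j => (β j).re)
  set e : (Fin n → ℤ) → Fin n → ℝ := fun α i => (α i : ℝ)
  set F := l.toExposed (convexHull ℝ (e '' A))
  set z : Fin n → ℂ := fun j => Complex.exp (Complex.I * ((β j).im : ℂ) * θ)
  have hface : A.filter (fun α => e α ∈ F) = A.filter (fun α => ∀ α' ∈ A,
      (∑ j, (α' j : ℝ) * (β j).re) ≤ ∑ j, (α j : ℝ) * (β j).re) :=
    l.filter_mem_toExposed_convexHull e A
  obtain ⟨α₀, hα₀A, hα₀max⟩ := A.exists_max_image (fun α => l (e α)) hA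
  have hm : 0 < l (e α₀) := by
    have hl : l ≠ 0 := fun h => hβ (dotProduct_self_eq_zero.1 (congrArg (· fun j => (β j).re) h))
    obtain ⟨_, ⟨α, hα, rfl⟩, hpos⟩ := exists_pos_of_zero_mem_interior_convexHull hconv hl
    exact hpos.trans_le (hα₀max α hα)
  have hlevel : ∀ α ∈ A.filter (fun α => e α ∈ F), l (e α) = l (e α₀) := fun α hα => by
    rw [hface, mem_filter] at hα
    exact le_antisymm (hα₀max α hα.1) (hα.2 α₀ hα₀A)
  have hα₀F : α₀ ∈ A.filter (fun α => e α ∈ F) := by rw [hface, mem_filter]; exact ⟨hα₀A, hα₀max⟩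
  obtain ⟨j, hj⟩ := exists_sum_filter_mul_coord_ne_zero (P := fun α => ∏ i, z i ^ α i) hc
    (fun α => prod_ne_zero_iff.2 fun i _ => zpow_ne_zero _ (Complex.exp_ne_zero _)) hm.ne' hlevel
    ⟨α₀, mem_filter.1 hα₀F⟩ fun hdim h =>
      hnd F ContinuousLinearMap.toExposed.isExposed hdim ⟨z, fun _ => Complex.exp_ne_zero _, h⟩
  rw [← hface]
  refine sum_pos' (fun _ _ => norm_nonneg _) ⟨j, mem_univ j, norm_pos_iff.2 ?_⟩
  simpa only [z, prod_exp_zpow_eq_exp_im] using hj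

/-- **The key nonvanishing claim for convenient nondegenerate Laurent polynomials.**
Let `f(z) = Σ_{α∈A} c_α z^α` be convenient and nondegenerate, let `β ∈ ℂⁿ` with
`Re β ≠ 0`, and let `M ⊆ A` be the set of exponents maximizing `⟨·, Re β⟩` on `A`.
Then for every `θ ∈ ℝ`,
`Σᵢ |Σ_{α∈M} c_α·αᵢ·e^{i·Im⟨α,β⟩·θ}| > 0`. -/
theorem laurent_nonvanishing_claim
    (n : ℕ) (hn : 1 ≤ n) (A : Finset (Fin n → ℤ)) (hA : A.Nonempty)
    (c : (Fin n → ℤ) → ℂ) (hc : ∀ α ∈ A, c α ≠ 0)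
    -- `f` is convenient
    (hconv : (0 : Fin n → ℝ) ∈
      interior (convexHull ℝ ((fun (α : Fin n → ℤ) (i : Fin n) => (α i : ℝ)) '' A)))
    -- `f` is nondegenerate
    (hnd : ∀ F : Set (Fin n → ℝ),
      IsExposed ℝ (convexHull ℝ ((fun (α : Fin n → ℤ) (i : Fin n) => (α i : ℝ)) '' A)) F →
      0 < Module.finrank ℝ (vectorSpan ℝ F) →
      ¬ ∃ z : Fin n → ℂ, (∀ i, z i ≠ 0) ∧
        (∑ α ∈ A.filter (fun α => (fun i => (α i : ℝ)) ∈ F),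
            c α * ∏ i, z i ^ (α i)) = 0 ∧
        ∀ j, (∑ α ∈ A.filter (fun α => (fun i => (α i : ℝ)) ∈ F),
            c α * (α j : ℂ) * ∏ i, z i ^ (α i)) = 0)
    (β : Fin n → ℂ) (hβ : (fun j => (β j).re) ≠ (0 : Fin n → ℝ)) :
    ∀ θ : ℝ,
      0 < ∑ i, ‖
        (∑ α ∈ A.filter (fun α => ∀ α' ∈ A,
            (∑ j, (α' j : ℝ) * (β j).re) ≤ ∑ j, (α j : ℝ) * (β j).re),
          c α * (α i : ℂ) *
            Complex.exp (Complex.I * (((∑ j, (α j : ℂ) * β j).im : ℝ) : ℂ) * (θ : ℂ)))‖ :=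
  laurent_nonvanishing_claim_general n A hA c hc hconv hnd β hβ
end

section
/- (Weights of invertible nondegenerate polynomials of chain and loop type.) Let a₁,…,a_N be integers with aᵢ ≥ 2 for all i. (i) Chain type: the weights q₁,…,q_N determined by the system aᵢqᵢ + q_{i+1} = 1 for 1 ≤ i ≤ N−1 and a_N q_N = 1 (these make W_chain = z₁^{a₁}z₂ + z₂^{a₂}z₃ + ⋯ + z_{N−1}^{a_{N−1}}z_N + z_N^{a_N} quasi-homogeneous of total weight 1) satisfy 0 < qᵢ ≤ 1/2 for every i. (ii) Loop type (N ≥ 2): the linear system aᵢqᵢ + q_{i+1} = 1 with indices taken modulo N (these make W_loop = z₁^{a₁}z₂ + z₂^{a₂}z₃ + ⋯ + z_N^{a_N}z₁ quasi-homogeneous of total weight 1) has a unique solution (q₁,…,q_N), and it satisfies 0 < qᵢ ≤ 1/2 for every i. -/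
/-!
Chain: `0 ≤ q_{i+1} < 1` forces `0 < q_i ≤ 1/2`, so descending induction from `a_N q_N = 1`
settles it. Loop, with `i ↦ i + 1` replaced by any self-map `next` of a finite index set:
if a weight `q_j` is minimal and `≤ 0`, the equations give
`q_{next (next j)} ≤ 4 q_j - 1 < q_j`; hence all weights are positive. If `d` solves the
homogeneous system and `|d_j|` is maximal, then `|d_{next j}| ≥ 2 |d_j| ≥ 2 |d_{next j}|`, so
`d = 0`; the linear system is therefore injective, hence bijective by finite-dimensionality.
-/

def weightEquationMap {R ι : Type*} [CommSemiring R] (next : ι → ι) (a : ι → R) :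
    (ι → R) →ₗ[R] (ι → R) where
  toFun q i := a i * q i + q (next i)
  map_add' q q' := by ext i; simp only [Pi.add_apply]; ring
  map_smul' c q := by ext i; simp only [Pi.smul_apply, smul_eq_mul, RingHom.id_apply]; ring

section Weights

variable {K : Type*} [Field K] [LinearOrder K] [IsStrictOrderedRing K]

lemma pos_of_mul_add_eq_one {a x y : K} (ha : 0 < a) (h : a * x + y = 1) (hy : y < 1) :
    0 < x :=
  pos_of_mul_pos_right (a := a) (by linarith) ha.le

lemma le_half_of_mul_add_eq_one {a x y : K} (ha : 2 ≤ a) (h : a * x + y = 1) (hx : 0 ≤ x)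
    (hy : 0 ≤ y) : x ≤ 1 / 2 := by
  nlinarith

theorem chain_weights_pos_le_half {n : ℕ} (a q : Fin (n + 1) → K) (ha : ∀ i, 2 ≤ a i)
    (hstep : ∀ i : Fin n, a i.castSucc * q i.castSucc + q i.succ = 1)
    (hlast : a (Fin.last n) * q (Fin.last n) = 1) (i : Fin (n + 1)) :
    0 < q i ∧ q i ≤ 1 / 2 := by
  induction i using Fin.reverseInduction with
  | last =>
    have hlast' : a (Fin.last n) * q (Fin.last n) + 0 = 1 := by rwa [add_zero]
    have hpos := pos_of_mul_add_eq_one (by linarith [ha (Fin.last n)]) hlast' zero_lt_one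
    exact ⟨hpos, le_half_of_mul_add_eq_one (ha _) hlast' hpos.le le_rfl⟩
  | cast i ih =>
    have hpos := pos_of_mul_add_eq_one (by linarith [ha i.castSucc]) (hstep i)
      (by linarith [ih.2])
    exact ⟨hpos, le_half_of_mul_add_eq_one (ha _) (hstep i) hpos.le ih.1.le⟩

variable {ι : Type*} [Finite ι] (next : ι → ι) {a : ι → K}

theorem forall_pos_of_forall_mul_add_eq_one (ha : ∀ i, 2 ≤ a i) {q : ι → K}
    (hq : ∀ i, a i * q i + q (next i) = 1) (i : ι) : 0 < q i := by
  have : Nonempty ι := ⟨i⟩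
  obtain ⟨j, hmin⟩ := Finite.exists_min q
  suffices 0 < q j from this.trans_le (hmin i)
  by_contra! hj
  have hk : 1 - 2 * q j ≤ q (next j) := by nlinarith [hq j, ha j]
  have hl : q (next (next j)) ≤ 1 - 2 * q (next j) := by
    nlinarith [hq (next j), ha (next j)]
  linarith [hmin (next (next j))]

theorem eq_zero_of_forall_mul_add_eq_zero (ha : ∀ i, 2 ≤ a i) {d : ι → K}
    (hd : ∀ i, a i * d i + d (next i) = 0) : d = 0 := by
  have hgrow : ∀ i, 2 * |d i| ≤ |d (next i)| := fun i => by
    rw [eq_neg_of_add_eq_zero_right (hd i), abs_neg, abs_mul,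
      abs_of_nonneg (zero_le_two.trans (ha i))]
    exact mul_le_mul_of_nonneg_right (ha i) (abs_nonneg _)
  funext i
  have : Nonempty ι := ⟨i⟩
  obtain ⟨j, hmax⟩ := Finite.exists_max fun i => |d i|
  have hj : |d j| = 0 := by
    linarith [hgrow j, hgrow (next j), hmax (next j), abs_nonneg (d j)]
  exact abs_nonpos_iff.mp ((hmax i).trans hj.le)

theorem weightEquationMap_injective (ha : ∀ i, 2 ≤ a i) :
    Function.Injective (weightEquationMap next a) := by
  rw [← LinearMap.ker_eq_bot, LinearMap.ker_eq_bot']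
  exact fun d hd => eq_zero_of_forall_mul_add_eq_zero next ha (congrFun hd)

theorem existsUnique_forall_mul_add_eq_one (ha : ∀ i, 2 ≤ a i) :
    ∃! q : ι → K, ∀ i, a i * q i + q (next i) = 1 := by
  have hinj := weightEquationMap_injective next ha
  obtain ⟨q, hq⟩ := LinearMap.injective_iff_surjective.mp hinj 1
  exact ⟨q, congrFun hq, fun q' hq' => hinj ((funext hq').trans hq.symm)⟩

end Weights

/-- **Weights of invertible nondegenerate polynomials of chain and loop type.**
Let `a₁,…,a_N` be integers with `aᵢ ≥ 2`.
(i) Chain type: the weights determined by `aᵢqᵢ + q_{i+1} = 1` (for `i < N`) and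
`a_N q_N = 1`, which make `W_chain = z₁^{a₁}z₂ + ⋯ + z_{N−1}^{a_{N−1}}z_N + z_N^{a_N}`
quasi-homogeneous of total weight `1`, satisfy `0 < qᵢ ≤ 1/2` for every `i`.
(ii) Loop type (`N ≥ 2`): the system `aᵢqᵢ + q_{i+1} = 1` with indices modulo `N`,
which makes `W_loop = z₁^{a₁}z₂ + ⋯ + z_N^{a_N}z₁` quasi-homogeneous of total weight
`1`, has a unique solution, and it satisfies `0 < qᵢ ≤ 1/2` for every `i`. -/
theorem chain_loop_weights (N : ℕ) (a : Fin N → ℕ) (ha : ∀ i, 2 ≤ a i) :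
    ((1 ≤ N) → ∀ q : Fin N → ℚ,
        (∀ i : Fin N, ∀ h : i.1 + 1 < N, (a i : ℚ) * q i + q ⟨i.1 + 1, h⟩ = 1) →
        (∀ h : N - 1 < N, (a ⟨N - 1, h⟩ : ℚ) * q ⟨N - 1, h⟩ = 1) →
        ∀ i, 0 < q i ∧ q i ≤ 1 / 2)
    ∧ (∀ h2 : 2 ≤ N,
        (∃! q : Fin N → ℚ, ∀ i : Fin N,
            (a i : ℚ) * q i + q (i + ⟨1, by omega⟩) = 1)
        ∧ ∀ q : Fin N → ℚ,
            (∀ i : Fin N, (a i : ℚ) * q i + q (i + ⟨1, by omega⟩) = 1) →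
            ∀ i, 0 < q i ∧ q i ≤ 1 / 2) := by
  have ha' : ∀ i, (2 : ℚ) ≤ a i := fun i => by exact_mod_cast ha i
  refine ⟨fun hN q hstep hlast => ?_, fun h2 => ⟨existsUnique_forall_mul_add_eq_one _ ha',
    fun q hq i => ?_⟩⟩
  · obtain ⟨n, rfl⟩ : ∃ n, N = n + 1 := ⟨N - 1, by omega⟩
    exact chain_weights_pos_le_half _ q ha' (fun i => hstep i.castSucc (Nat.succ_lt_succ i.isLt))
      (hlast (by omega))
  · have hpos := forall_pos_of_forall_mul_add_eq_one _ ha' hq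
    exact ⟨hpos i, le_half_of_mul_add_eq_one (ha' i) (hq i) (hpos i).le (hpos _).le⟩
end
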